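/- arXiv:2105.12237 — 11 statements merged into one kernel-verified Lean document; each statement's English description precedes it below -/
import Mathlib

section
/- Let X ∈ ℝ^{n×d}, y ∈ ℝⁿ, β > 0, and let ℓ(·, y) : ℝⁿ → ℝ be convex. Let (v_i*, w_i*)_{i=1}^P be an optimal solution of the convex program inf over (v_i, w_i)_{i=1}^P of ℓ(∑_{i=1}^P D_i X (v_i − w_i), y) + β ∑_{i=1}^P (‖v_i‖₂ + ‖w_i‖₂) subject to (2D_i − I_n) X v_i ≥ 0 and (2D_i − I_n) X w_i ≥ 0 for all i ∈ [P], and let m* = |{i : v_i* ≠ 0}| + |{i : w_i* ≠ 0}|. Define network weights: for each i with v_i* ≠ 0, a neuron (u, α) = (v_i*/√‖v_i*‖₂, √‖v_i*‖₂); for each i with w_i* ≠ 0, a neuron (u, α) = (w_i*/√‖w_i*‖₂, −√‖w_i*‖₂); all remaining neurons zero. Then for any width m ≥ m*, these weights (u_j*, α_j*)_{j=1}^m are a global minimizer of the nonconvex training problem inf over (u_j, α_j)_{j=1}^m of ℓ(∑_{j=1}^m (X u_j)_+ α_j, y) + (β/2) ∑_{j=1}^m (‖u_j‖₂² + α_j²).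 -/
/-!
A ReLU neuron is positively homogeneous, so rescaling `(u, α) ↦ (u / t, t α)` leaves its output
unchanged, and at the balanced scale its weight decay `‖u‖² + α²` equals `2 |α| ‖u‖`. Hence the
recovered network attains, in the nonconvex problem, the optimal value of the convex program.
Conversely, grouping the neurons of any network `(u', α')` by the activation pattern `D_i` of
`X u'_j` and the sign of `α'_j` gives the feasible point `v_i = ∑ α'_j⁺ u'_j`,
`w_i = ∑ α'_j⁻ u'_j` of the convex program with the same output and, by the triangle inequality
and AM–GM, regulariser at most `½ ∑ (‖u'_j‖² + α'_j²)`.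
-/

open Matrix Function

section ActivationPattern

variable {ι : Type*} [Fintype ι] [DecidableEq ι]

lemma two_smul_diagonal_sub_one_mulVec_apply (q z : ι → ℝ) (k : ι) :
    (((2 : ℝ) • diagonal q - 1) *ᵥ z) k = (2 * q k - 1) * z k := by
  simp only [sub_mulVec, smul_mulVec, one_mulVec, Pi.sub_apply, Pi.smul_apply, mulVec_diagonal,
    smul_eq_mul]
  ring

lemma diagonal_indicator_mulVec_eq_posPart {p : ι → Prop} [DecidablePred p] {z : ι → ℝ}
    (hz : 0 ≤ ((2 : ℝ) • diagonal (fun k => if p k then (1 : ℝ) else 0) - 1) *ᵥ z) :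
    diagonal (fun k => if p k then (1 : ℝ) else 0) *ᵥ z = z⁺ := by
  funext k
  have hk := hz k
  rw [Pi.zero_apply, two_smul_diagonal_sub_one_mulVec_apply] at hk
  by_cases hp : p k <;> simp_all [mulVec_diagonal]

lemma two_smul_diagonal_indicator_sub_one_mulVec_nonneg (z : ι → ℝ) :
    0 ≤ ((2 : ℝ) • diagonal (fun k => if 0 ≤ z k then (1 : ℝ) else 0) - 1) *ᵥ z := by
  intro k
  rw [Pi.zero_apply, two_smul_diagonal_sub_one_mulVec_apply]
  split_ifs with hz
  · linarith
  · linarith [not_le.mp hz]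

lemma diagonal_indicator_mulVec_self (z : ι → ℝ) :
    diagonal (fun k => if 0 ≤ z k then (1 : ℝ) else 0) *ᵥ z = z⁺ :=
  diagonal_indicator_mulVec_eq_posPart (two_smul_diagonal_indicator_sub_one_mulVec_nonneg z)

end ActivationPattern

lemma mulVec_sum_smul_nonneg {ι μ κ : Type*} [Fintype μ] (M : Matrix ι μ ℝ) (s : Finset κ)
    (c : κ → ℝ) (z : κ → μ → ℝ) (hc : ∀ j ∈ s, 0 ≤ c j) (hz : ∀ j ∈ s, 0 ≤ M *ᵥ z j) :
    0 ≤ M *ᵥ ∑ j ∈ s, c j • z j := by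
  rw [mulVec_sum]
  exact Finset.sum_nonneg fun j hj => by
    rw [mulVec_smul]; exact smul_nonneg (hc j hj) (hz j hj)

lemma sqrt_sum_sq_eq_norm {δ : Type*} [Fintype δ] (v : δ → ℝ) :
    √(∑ h, v h ^ 2) = ‖WithLp.toLp 2 v‖ := by
  simp [EuclideanSpace.norm_eq]

section Neuron

variable {μ δ : Type*} [Fintype δ]

lemma sqrt_sqrt_smul_posPart_mulVec_div (X : Matrix μ δ ℝ) (v : δ → ℝ) :
    √√(∑ h, v h ^ 2) • (X *ᵥ fun h => v h / √√(∑ h', v h' ^ 2))⁺ = (X *ᵥ v)⁺ := by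
  rcases (Real.sqrt_nonneg _ : 0 ≤ √√(∑ h, v h ^ 2)).eq_or_lt with hc0 | hcpos
  · have hv : v = 0 := by
      rw [eq_comm, Real.sqrt_eq_zero (Real.sqrt_nonneg _), sqrt_sum_sq_eq_norm] at hc0
      simpa using hc0
    simp [hv]
  · have hdiv : (fun h => v h / √√(∑ h', v h' ^ 2)) = (√√(∑ h, v h ^ 2))⁻¹ • v := by
      funext h; simp [div_eq_inv_mul]
    funext k
    rw [hdiv, mulVec_smul, Pi.smul_apply, Pi.posPart_apply, Pi.posPart_apply, Pi.smul_apply,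
      posPart_def, posPart_def, smul_eq_mul, smul_eq_mul, mul_max_of_nonneg _ _ hcpos.le,
      ← mul_assoc, mul_inv_cancel₀ hcpos.ne', one_mul, mul_zero]

lemma sum_div_sqrt_sqrt_sq_add_sq (v : δ → ℝ) :
    (∑ h, (v h / √√(∑ h', v h' ^ 2)) ^ 2) + √√(∑ h, v h ^ 2) ^ 2 = 2 * √(∑ h, v h ^ 2) := by
  have ht : 0 ≤ ∑ h, v h ^ 2 := Finset.sum_nonneg fun _ _ => sq_nonneg _
  have hsq : √√(∑ h, v h ^ 2) ^ 2 = √(∑ h, v h ^ 2) := Real.sq_sqrt (Real.sqrt_nonneg _)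
  simp only [div_pow, hsq, ← Finset.sum_div, Real.div_sqrt]
  ring

lemma sum_max_mulVec_mul_eq_sum_smul_posPart {ι : Type*} [Fintype ι] (X : Matrix μ δ ℝ)
    (u : ι → δ → ℝ) (α : ι → ℝ) :
    (fun k => ∑ j, max ((X *ᵥ u j) k) 0 * α j) = ∑ j, α j • (X *ᵥ u j)⁺ := by
  funext k
  simp [Finset.sum_apply, mul_comm, posPart_def]

end Neuron

section RecoveredNetwork

variable {κ ι δ : Type*} [Fintype κ] [Fintype ι] [Fintype δ]

def IsRecoveredNetwork (vstar wstar : κ → δ → ℝ) (u : ι → δ → ℝ) (α : ι → ℝ) : Prop :=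
  ∃ (j₁ : {i : κ // vstar i ≠ 0} → ι) (j₂ : {i : κ // wstar i ≠ 0} → ι),
    Injective j₁ ∧ Injective j₂ ∧ (∀ a b, j₁ a ≠ j₂ b) ∧
    (∀ a, u (j₁ a) = fun h => vstar a.1 h / √√(∑ h', (vstar a.1 h') ^ 2)) ∧
    (∀ a, α (j₁ a) = √√(∑ h', (vstar a.1 h') ^ 2)) ∧
    (∀ b, u (j₂ b) = fun h => wstar b.1 h / √√(∑ h', (wstar b.1 h') ^ 2)) ∧
    (∀ b, α (j₂ b) = -√√(∑ h', (wstar b.1 h') ^ 2)) ∧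
    (∀ j, (∀ a, j₁ a ≠ j) → (∀ b, j₂ b ≠ j) → u j = 0 ∧ α j = 0)

lemma IsRecoveredNetwork.sum_eq {M : Type*} [AddCommMonoid M] {vstar wstar : κ → δ → ℝ}
    {u : ι → δ → ℝ} {α : ι → ℝ} (h : IsRecoveredNetwork vstar wstar u α)
    (F : (δ → ℝ) → ℝ → M) (hF : F 0 0 = 0) :
    ∑ j, F (u j) (α j) =
      ∑ i, F (fun h => vstar i h / √√(∑ h', vstar i h' ^ 2)) (√√(∑ h, vstar i h ^ 2)) +
      ∑ i, F (fun h => wstar i h / √√(∑ h', wstar i h' ^ 2)) (-√√(∑ h, wstar i h ^ 2)) := by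
  obtain ⟨j₁, j₂, hj₁, hj₂, hdisj, hu₁, hα₁, hu₂, hα₂, hzero⟩ := h
  have hoff : ∀ j ∉ Set.range (Sum.elim j₁ j₂), F (u j) (α j) = 0 := fun j hj => by
    obtain ⟨hu, hα⟩ := hzero j (fun a ha => hj ⟨.inl a, ha⟩) (fun b hb => hj ⟨.inr b, hb⟩)
    rw [hu, hα, hF]
  rw [← Fintype.sum_of_injective _ (hj₁.sumElim hj₂ hdisj) _ _ hoff (fun _ => rfl),
    Fintype.sum_sum_type]
  congr 1
  · refine Fintype.sum_of_injective _ Subtype.val_injective _ _ (fun i hi => ?_) (fun a => ?_)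
    · convert hF using 2 <;> simp [not_ne_iff.mp fun h => hi ⟨⟨i, h⟩, rfl⟩, funext_iff]
    · simp [hu₁, hα₁]
  · refine Fintype.sum_of_injective _ Subtype.val_injective _ _ (fun i hi => ?_) (fun b => ?_)
    · convert hF using 2 <;> simp [not_ne_iff.mp fun h => hi ⟨⟨i, h⟩, rfl⟩, funext_iff]
    · simp [hu₂, hα₂]

end RecoveredNetwork

lemma sum_norm_fiberwise_posPart_add_negPart_le {ι κ E : Type*} [Fintype ι] [Fintype κ]
    [DecidableEq κ] [SeminormedAddCommGroup E] [NormedSpace ℝ E] (I : ι → κ) (c : ι → ℝ)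
    (u : ι → E) :
    ∑ i, (‖∑ j : {j // I j = i}, (c j)⁺ • u j‖ + ‖∑ j : {j // I j = i}, (c j)⁻ • u j‖) ≤
      ∑ j, |c j| * ‖u j‖ := by
  calc _ ≤ ∑ i, ∑ j : {j // I j = i}, |c j| * ‖u j‖ := by
        gcongr with i
        refine (add_le_add (norm_sum_le _ _) (norm_sum_le _ _)).trans_eq ?_
        simp only [← Finset.sum_add_distrib, norm_smul, Real.norm_eq_abs, ← add_mul,
          abs_of_nonneg (posPart_nonneg _), abs_of_nonneg (negPart_nonneg _), posPart_add_negPart]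
    _ = ∑ j, |c j| * ‖u j‖ := Fintype.sum_fiberwise I fun j => |c j| * ‖u j‖

lemma two_mul_abs_mul_sqrt_sum_sq_le {δ : Type*} [Fintype δ] (a : ℝ) (u : δ → ℝ) :
    2 * (|a| * √(∑ h, u h ^ 2)) ≤ ∑ h, u h ^ 2 + a ^ 2 := by
  have := two_mul_le_add_sq (√(∑ h, u h ^ 2)) |a|
  rw [Real.sq_sqrt (Finset.sum_nonneg fun _ _ => sq_nonneg _), sq_abs] at this
  linarith

lemma exists_feasible_of_network {μ δ κ ι : Type*} [Fintype μ] [DecidableEq μ] [Fintype δ]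
    [Fintype κ] [DecidableEq κ] [Fintype ι] (X : Matrix μ δ ℝ) (D : κ → Matrix μ μ ℝ)
    (hD : ∀ u : δ → ℝ, ∃ i, D i = diagonal (fun k => if 0 ≤ (X *ᵥ u) k then (1 : ℝ) else 0))
    (u : ι → δ → ℝ) (α : ι → ℝ) :
    ∃ v w : κ → δ → ℝ,
      (∀ i, 0 ≤ ((2 : ℝ) • D i - 1) *ᵥ (X *ᵥ v i)) ∧
      (∀ i, 0 ≤ ((2 : ℝ) • D i - 1) *ᵥ (X *ᵥ w i)) ∧
      ∑ i, D i *ᵥ (X *ᵥ (v i - w i)) = ∑ j, α j • (X *ᵥ u j)⁺ ∧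
      2 * ∑ i, (√(∑ h, v i h ^ 2) + √(∑ h, w i h ^ 2)) ≤ ∑ j, (∑ h, u j h ^ 2 + α j ^ 2) := by
  choose I hI using fun j => hD (u j)
  have hfeas : ∀ c : ι → ℝ, (∀ j, 0 ≤ c j) →
      ∀ i, 0 ≤ ((2 : ℝ) • D i - 1) *ᵥ (X *ᵥ ∑ j : {j // I j = i}, c j • u j) := by
    intro c hc i
    rw [mulVec_mulVec]
    refine mulVec_sum_smul_nonneg _ _ _ _ (fun j _ => hc j) ?_
    rintro ⟨j, rfl⟩ _
    rw [← mulVec_mulVec, hI]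
    exact two_smul_diagonal_indicator_sub_one_mulVec_nonneg _
  refine ⟨fun i => ∑ j : {j // I j = i}, (α j)⁺ • u j, fun i => ∑ j : {j // I j = i}, (α j)⁻ • u j,
    hfeas (fun j => (α j)⁺) fun j => posPart_nonneg _,
    hfeas (fun j => (α j)⁻) fun j => negPart_nonneg _, ?_, ?_⟩
  · calc _ = ∑ i, ∑ j : {j // I j = i}, α j • (X *ᵥ u j)⁺ := by
          refine Finset.sum_congr rfl fun i _ => ?_
          rw [← Finset.sum_sub_distrib, mulVec_sum, mulVec_sum]
          refine Finset.sum_congr rfl ?_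
          rintro ⟨j, rfl⟩ _
          rw [← sub_smul, posPart_sub_negPart, mulVec_smul, mulVec_smul, hI,
            diagonal_indicator_mulVec_self]
      _ = ∑ j, α j • (X *ᵥ u j)⁺ := Fintype.sum_fiberwise I fun j => α j • (X *ᵥ u j)⁺
  · simp only [sqrt_sum_sq_eq_norm, WithLp.toLp_sum, WithLp.toLp_smul]
    refine (mul_le_mul_of_nonneg_left (sum_norm_fiberwise_posPart_add_negPart_le I α
      fun j => WithLp.toLp 2 (u j)) zero_le_two).trans ?_
    rw [Finset.mul_sum]
    refine Finset.sum_le_sum fun j _ => ?_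
    rw [← sqrt_sum_sq_eq_norm]
    exact two_mul_abs_mul_sqrt_sum_sq_le _ _

theorem statement_1_general {n d P : ℕ}
    (X : Matrix (Fin n) (Fin d) ℝ) (β : ℝ) (hβ : 0 < β)
    (ℓ : (Fin n → ℝ) → ℝ)
    (D : Fin P → Matrix (Fin n) (Fin n) ℝ)
    (hDform : ∀ i, ∃ u : Fin d → ℝ,
      D i = Matrix.diagonal (fun k => if 0 ≤ (X *ᵥ u) k then (1 : ℝ) else 0))
    (hDall : ∀ u : Fin d → ℝ, ∃ i,
      D i = Matrix.diagonal (fun k => if 0 ≤ (X *ᵥ u) k then (1 : ℝ) else 0))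
    (vstar wstar : Fin P → Fin d → ℝ)
    -- (vstar, wstar) is an optimal solution of the convex program:
    (hv : ∀ i, ∀ k, 0 ≤ (((2 : ℝ) • D i - 1) *ᵥ (X *ᵥ vstar i)) k)
    (hw : ∀ i, ∀ k, 0 ≤ (((2 : ℝ) • D i - 1) *ᵥ (X *ᵥ wstar i)) k)
    (hopt : ∀ v w : Fin P → Fin d → ℝ,
      (∀ i, ∀ k, 0 ≤ (((2 : ℝ) • D i - 1) *ᵥ (X *ᵥ v i)) k) →
      (∀ i, ∀ k, 0 ≤ (((2 : ℝ) • D i - 1) *ᵥ (X *ᵥ w i)) k) →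
      ℓ (∑ i, D i *ᵥ (X *ᵥ (vstar i - wstar i))) +
        β * ∑ i, (Real.sqrt (∑ h, (vstar i h) ^ 2) + Real.sqrt (∑ h, (wstar i h) ^ 2)) ≤
      ℓ (∑ i, D i *ᵥ (X *ᵥ (v i - w i))) +
        β * ∑ i, (Real.sqrt (∑ h, (v i h) ^ 2) + Real.sqrt (∑ h, (w i h) ^ 2)))
    (mstar : ℕ) :
    ∀ m : ℕ, mstar ≤ m →
    ∀ (u : Fin m → Fin d → ℝ) (α : Fin m → ℝ),
      -- (u, α) is an arrangement of the recovered weights: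
      (∃ (j₁ : {i : Fin P // vstar i ≠ 0} → Fin m) (j₂ : {i : Fin P // wstar i ≠ 0} → Fin m),
        Function.Injective j₁ ∧ Function.Injective j₂ ∧ (∀ a b, j₁ a ≠ j₂ b) ∧
        (∀ a, u (j₁ a) =
          fun h => vstar a.1 h / Real.sqrt (Real.sqrt (∑ h', (vstar a.1 h') ^ 2))) ∧
        (∀ a, α (j₁ a) = Real.sqrt (Real.sqrt (∑ h', (vstar a.1 h') ^ 2))) ∧
        (∀ b, u (j₂ b) =
          fun h => wstar b.1 h / Real.sqrt (Real.sqrt (∑ h', (wstar b.1 h') ^ 2))) ∧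
        (∀ b, α (j₂ b) = - Real.sqrt (Real.sqrt (∑ h', (wstar b.1 h') ^ 2))) ∧
        (∀ j, (∀ a, j₁ a ≠ j) → (∀ b, j₂ b ≠ j) → u j = 0 ∧ α j = 0)) →
      -- then (u, α) is a global minimizer of the nonconvex training problem:
      ∀ (u' : Fin m → Fin d → ℝ) (α' : Fin m → ℝ),
        ℓ (fun k => ∑ j, max ((X *ᵥ u j) k) 0 * α j) +
          β / 2 * ∑ j, ((∑ h, (u j h) ^ 2) + (α j) ^ 2) ≤
        ℓ (fun k => ∑ j, max ((X *ᵥ u' j) k) 0 * α' j) +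
          β / 2 * ∑ j, ((∑ h, (u' j h) ^ 2) + (α' j) ^ 2) := by
  intro m _ u α (hrec : IsRecoveredNetwork vstar wstar u α) u' α'
  have hrelu : ∀ i z, 0 ≤ ((2 : ℝ) • D i - 1) *ᵥ (X *ᵥ z) → D i *ᵥ (X *ᵥ z) = (X *ᵥ z)⁺ := by
    intro i z hz
    obtain ⟨u₀, hu₀⟩ := hDform i
    rw [hu₀] at hz ⊢
    exact diagonal_indicator_mulVec_eq_posPart hz
  have hrec_output : ∑ j, α j • (X *ᵥ u j)⁺ = ∑ i, D i *ᵥ (X *ᵥ (vstar i - wstar i)) := by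
    rw [hrec.sum_eq (fun u a => a • (X *ᵥ u)⁺) (by simp)]
    simp only [sqrt_sqrt_smul_posPart_mulVec_div, neg_smul, Finset.sum_neg_distrib,
      ← sub_eq_add_neg, ← Finset.sum_sub_distrib, mulVec_sub]
    exact Finset.sum_congr rfl fun i _ => by rw [hrelu i _ (hv i), hrelu i _ (hw i)]
  have hrec_cost : ∑ j, (∑ h, u j h ^ 2 + α j ^ 2) =
      2 * ∑ i, (√(∑ h, vstar i h ^ 2) + √(∑ h, wstar i h ^ 2)) := by
    rw [hrec.sum_eq (fun u a => ∑ h, u h ^ 2 + a ^ 2) (by simp)]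
    simp only [neg_sq, sum_div_sqrt_sqrt_sq_add_sq, ← Finset.mul_sum, Finset.sum_add_distrib,
      mul_add]
  obtain ⟨v, w, hv', hw', hout, hcost⟩ := exists_feasible_of_network X D hDall u' α'
  have hconvex := hopt v w hv' hw'
  rw [sum_max_mulVec_mul_eq_sum_smul_posPart, sum_max_mulVec_mul_eq_sum_smul_posPart,
    hrec_output, hrec_cost, ← hout]
  linarith [mul_le_mul_of_nonneg_left hcost (half_pos hβ).le]

/-- the weights recovered from a minimizer of the convex program are a global
minimizer of the nonconvex training problem, for any width `m ≥ m*`. -/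
theorem statement_1 {n d P : ℕ}
    (X : Matrix (Fin n) (Fin d) ℝ) (y : Fin n → ℝ) (β : ℝ) (hβ : 0 < β)
    (ℓ : (Fin n → ℝ) → ℝ) (hℓ : ConvexOn ℝ Set.univ ℓ)
    (D : Fin P → Matrix (Fin n) (Fin n) ℝ)
    (hDinj : Function.Injective D)
    (hDform : ∀ i, ∃ u : Fin d → ℝ,
      D i = Matrix.diagonal (fun k => if 0 ≤ (X *ᵥ u) k then (1 : ℝ) else 0))
    (hDall : ∀ u : Fin d → ℝ, ∃ i,
      D i = Matrix.diagonal (fun k => if 0 ≤ (X *ᵥ u) k then (1 : ℝ) else 0))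
    (vstar wstar : Fin P → Fin d → ℝ)
    -- (vstar, wstar) is an optimal solution of the convex program:
    (hv : ∀ i, ∀ k, 0 ≤ (((2 : ℝ) • D i - 1) *ᵥ (X *ᵥ vstar i)) k)
    (hw : ∀ i, ∀ k, 0 ≤ (((2 : ℝ) • D i - 1) *ᵥ (X *ᵥ wstar i)) k)
    (hopt : ∀ v w : Fin P → Fin d → ℝ,
      (∀ i, ∀ k, 0 ≤ (((2 : ℝ) • D i - 1) *ᵥ (X *ᵥ v i)) k) →
      (∀ i, ∀ k, 0 ≤ (((2 : ℝ) • D i - 1) *ᵥ (X *ᵥ w i)) k) →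
      ℓ (∑ i, D i *ᵥ (X *ᵥ (vstar i - wstar i))) +
        β * ∑ i, (Real.sqrt (∑ h, (vstar i h) ^ 2) + Real.sqrt (∑ h, (wstar i h) ^ 2)) ≤
      ℓ (∑ i, D i *ᵥ (X *ᵥ (v i - w i))) +
        β * ∑ i, (Real.sqrt (∑ h, (v i h) ^ 2) + Real.sqrt (∑ h, (w i h) ^ 2)))
    (mstar : ℕ)
    (hmstar : mstar = (Finset.univ.filter fun i => vstar i ≠ 0).card +
      (Finset.univ.filter fun i => wstar i ≠ 0).card) :
    ∀ m : ℕ, mstar ≤ m →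
    ∀ (u : Fin m → Fin d → ℝ) (α : Fin m → ℝ),
      -- (u, α) is an arrangement of the recovered weights:
      (∃ (j₁ : {i : Fin P // vstar i ≠ 0} → Fin m) (j₂ : {i : Fin P // wstar i ≠ 0} → Fin m),
        Function.Injective j₁ ∧ Function.Injective j₂ ∧ (∀ a b, j₁ a ≠ j₂ b) ∧
        (∀ a, u (j₁ a) =
          fun h => vstar a.1 h / Real.sqrt (Real.sqrt (∑ h', (vstar a.1 h') ^ 2))) ∧
        (∀ a, α (j₁ a) = Real.sqrt (Real.sqrt (∑ h', (vstar a.1 h') ^ 2))) ∧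
        (∀ b, u (j₂ b) =
          fun h => wstar b.1 h / Real.sqrt (Real.sqrt (∑ h', (wstar b.1 h') ^ 2))) ∧
        (∀ b, α (j₂ b) = - Real.sqrt (Real.sqrt (∑ h', (wstar b.1 h') ^ 2))) ∧
        (∀ j, (∀ a, j₁ a ≠ j) → (∀ b, j₂ b ≠ j) → u j = 0 ∧ α j = 0)) →
      -- then (u, α) is a global minimizer of the nonconvex training problem:
      ∀ (u' : Fin m → Fin d → ℝ) (α' : Fin m → ℝ),
        ℓ (fun k => ∑ j, max ((X *ᵥ u j) k) 0 * α j) +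
          β / 2 * ∑ j, ((∑ h, (u j h) ^ 2) + (α j) ^ 2) ≤
        ℓ (fun k => ∑ j, max ((X *ᵥ u' j) k) 0 * α' j) +
          β / 2 * ∑ j, ((∑ h, (u' j h) ^ 2) + (α' j) ^ 2) :=
  statement_1_general X β hβ ℓ D hDform hDall vstar wstar hv hw hopt mstar
end

section
/- For every X ∈ ℝ^{n×d} and every v ∈ ℝⁿ, one has sup over u ∈ ℝ^d with ‖u‖₂ ≤ 1 of |vᵀ (Xu)_+| = max over i ∈ [P] of sup{ |vᵀ D_i X u| : u ∈ ℝ^d, ‖u‖₂ ≤ 1, (2D_i − I_n) X u ≥ 0 entrywise }, where D_1, …, D_P are the distinct diagonal matrices of the form diag([Xu ≥ 0]) over u ∈ ℝ^d. -/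
open Matrix

noncomputable section

private lemma diag_mulVec_apply {n : ℕ} (q : Fin n → ℝ) (w : Fin n → ℝ) (k : Fin n) :
    (Matrix.diagonal q *ᵥ w) k = q k * w k := by
  simp [Matrix.mulVec_diagonal]

/-- the supremum of `|vᵀ(Xu)₊|` over the unit ball equals the maximum over the
activation patterns `D_i` of the constrained suprema `|vᵀ D_i X u|`. -/
theorem statement_3 {n d P : ℕ}
    (X : Matrix (Fin n) (Fin d) ℝ) (v : Fin n → ℝ)
    (D : Fin P → Matrix (Fin n) (Fin n) ℝ)
    (hDinj : Function.Injective D)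
    (hDform : ∀ i, ∃ u : Fin d → ℝ,
      D i = Matrix.diagonal (fun k => if 0 ≤ (X *ᵥ u) k then (1 : ℝ) else 0))
    (hDall : ∀ u : Fin d → ℝ, ∃ i,
      D i = Matrix.diagonal (fun k => if 0 ≤ (X *ᵥ u) k then (1 : ℝ) else 0)) :
    sSup {t : ℝ | ∃ u : Fin d → ℝ, (∑ h, (u h) ^ 2) ≤ 1 ∧
        t = |∑ k, v k * max ((X *ᵥ u) k) 0|}
      = ⨆ i : Fin P, sSup {t : ℝ | ∃ u : Fin d → ℝ, (∑ h, (u h) ^ 2) ≤ 1 ∧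
          (∀ k, 0 ≤ (((2 : ℝ) • D i - 1) *ᵥ (X *ᵥ u)) k) ∧
          t = |∑ k, v k * (D i *ᵥ (X *ᵥ u)) k|} := by
  have hP : Nonempty (Fin P) := ⟨(hDall 0).choose⟩
  set S : Set ℝ := {t : ℝ | ∃ u : Fin d → ℝ, (∑ h, (u h) ^ 2) ≤ 1 ∧
        t = |∑ k, v k * max ((X *ᵥ u) k) 0|} with hS
  set T : Fin P → Set ℝ := fun i => {t : ℝ | ∃ u : Fin d → ℝ, (∑ h, (u h) ^ 2) ≤ 1 ∧
          (∀ k, 0 ≤ (((2 : ℝ) • D i - 1) *ᵥ (X *ᵥ u)) k) ∧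
          t = |∑ k, v k * (D i *ᵥ (X *ᵥ u)) k|} with hT
  -- bound on |u h|
  have hu_bd : ∀ (u : Fin d → ℝ), (∑ h, (u h) ^ 2) ≤ 1 → ∀ h, |u h| ≤ 1 := by
    intro u hu h
    have h1 : u h ^ 2 ≤ ∑ h, (u h) ^ 2 :=
      Finset.single_le_sum (fun i _ => sq_nonneg (u i)) (Finset.mem_univ h)
    nlinarith [abs_nonneg (u h), sq_abs (u h)]
  -- S is bounded above
  have hSbdd : BddAbove S := by
    refine ⟨∑ k, |v k| * (∑ h, |X k h|), fun t ht => ?_⟩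
    obtain ⟨u, hu, rfl⟩ := ht
    calc |∑ k, v k * max ((X *ᵥ u) k) 0| ≤ ∑ k, |v k * max ((X *ᵥ u) k) 0| :=
          Finset.abs_sum_le_sum_abs _ _
      _ ≤ ∑ k, |v k| * (∑ h, |X k h|) := by
          apply Finset.sum_le_sum
          intro k _
          rw [abs_mul]
          refine mul_le_mul_of_nonneg_left ?_ (abs_nonneg _)
          have h1 : |max ((X *ᵥ u) k) 0| ≤ |(X *ᵥ u) k| := by
            rcases le_total ((X *ᵥ u) k) 0 with h | h
            · simp [max_eq_right h, abs_nonneg]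
            · simp [max_eq_left h]
          refine h1.trans ?_
          calc |(X *ᵥ u) k| = |∑ h, X k h * u h| := by rfl
            _ ≤ ∑ h, |X k h * u h| := Finset.abs_sum_le_sum_abs _ _
            _ ≤ ∑ h, |X k h| := by
                apply Finset.sum_le_sum
                intro h _
                rw [abs_mul]
                calc |X k h| * |u h| ≤ |X k h| * 1 := by
                      gcongr; exact hu_bd u hu h
                  _ = |X k h| := mul_one _
  -- each T i ⊆ S
  have hTS : ∀ i, T i ⊆ S := by
    intro i t ht
    obtain ⟨u, hu, hcon, rfl⟩ := ht
    obtain ⟨u', hDi⟩ := hDform i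
    set q : Fin n → ℝ := fun k => if 0 ≤ (X *ᵥ u') k then (1 : ℝ) else 0 with hq
    refine ⟨u, hu, ?_⟩
    congr 1
    apply Finset.sum_congr rfl
    intro k _
    congr 1
    have hck := hcon k
    rw [hDi] at hck ⊢
    rw [Matrix.sub_mulVec, Matrix.smul_mulVec, Matrix.one_mulVec] at hck
    simp only [Pi.sub_apply, Pi.smul_apply, smul_eq_mul, diag_mulVec_apply] at hck ⊢
    by_cases hk : 0 ≤ (X *ᵥ u') k
    · simp only [hq, if_pos hk] at hck ⊢
      have : 0 ≤ (X *ᵥ u) k := by linarith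
      rw [one_mul, max_eq_left this]
    · simp only [hq, if_neg hk] at hck ⊢
      have : (X *ᵥ u) k ≤ 0 := by linarith
      rw [zero_mul, max_eq_right this]
  -- each T i is nonempty
  have hTne : ∀ i, (T i).Nonempty := by
    intro i
    refine ⟨|∑ k, v k * (D i *ᵥ (X *ᵥ (0 : Fin d → ℝ))) k|, 0, by simp, ?_, rfl⟩
    intro k
    simp
  have hSne : S.Nonempty := (hTne (Classical.arbitrary _)).mono (hTS _)
  -- range of sSup ∘ T is bdd above (finite)
  have hrange : BddAbove (Set.range fun i => sSup (T i)) :=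
    (Set.finite_range _).bddAbove
  apply le_antisymm
  · apply csSup_le hSne
    intro t ht
    obtain ⟨u, hu, rfl⟩ := ht
    obtain ⟨i, hDi⟩ := hDall u
    have hmem : |∑ k, v k * max ((X *ᵥ u) k) 0| ∈ T i := by
      refine ⟨u, hu, ?_, ?_⟩
      · intro k
        rw [hDi, Matrix.sub_mulVec, Matrix.smul_mulVec, Matrix.one_mulVec]
        simp only [Pi.sub_apply, Pi.smul_apply, smul_eq_mul, diag_mulVec_apply]
        by_cases hk : 0 ≤ (X *ᵥ u) k
        · rw [if_pos hk]; linarith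
        · rw [if_neg hk]; push_neg at hk; linarith
      · congr 1
        apply Finset.sum_congr rfl
        intro k _
        congr 1
        rw [hDi, diag_mulVec_apply]
        by_cases hk : 0 ≤ (X *ᵥ u) k
        · rw [if_pos hk, one_mul, max_eq_left hk]
        · rw [if_neg hk, zero_mul]; push_neg at hk
          rw [max_eq_right hk.le]
    calc |∑ k, v k * max ((X *ᵥ u) k) 0| ≤ sSup (T i) :=
          le_csSup (hSbdd.mono (hTS i)) hmem
      _ ≤ ⨆ i, sSup (T i) := le_ciSup hrange i
  · apply ciSup_le
    intro i
    exact csSup_le_csSup hSbdd (hTne i) (hTS i)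
end
end

section
/- Let X ∈ ℝ^{n×d}, y ∈ ℝⁿ, β > 0, and let ℓ(·, y) : ℝⁿ → ℝ be convex. Let a_1, …, a_{P_s+1} be i.i.d. standard Gaussian vectors in ℝ^d and set D_i = diag([X a_i ≥ 0]) for each i. Let p_{s1}* be the optimal value of the convex program inf over (v_i, w_i)_{i=1}^{P_s} of ℓ(∑_{i=1}^{P_s} D_i X (v_i − w_i), y) + β ∑_{i=1}^{P_s} (‖v_i‖₂ + ‖w_i‖₂) subject to (2D_i − I_n) X v_i ≥ 0 and (2D_i − I_n) X w_i ≥ 0 for all i ∈ [P_s], and let p_{s2}* be the optimal value of the analogous program formed with D_1, …, D_{P_s+1}. Fix ψ, ξ ∈ (0,1). If P_s ≥ (n+1)/(ψξ) − 1, then with probability at least 1 − ξ over the draw of (a_1, …, a_{P_s}), the conditional probability over the independent draw of a_{P_s+1} of the event { p_{s2}* < p_{s1}* } is at most ψ. -/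
open Matrix MeasureTheory ProbabilityTheory

noncomputable section

/-- The activation-pattern diagonal matrix `diag([Xa ≥ 0])`. -/
def Dmat {n d : ℕ} (X : Matrix (Fin n) (Fin d) ℝ) (a : Fin d → ℝ) :
    Matrix (Fin n) (Fin n) ℝ :=
  Matrix.diagonal fun k => if 0 ≤ (X *ᵥ a) k then (1 : ℝ) else 0

/-- The set of objective values of the sampled convex program built from
the diagonal matrices `D i`. -/
def progVals {n d P : ℕ} (X : Matrix (Fin n) (Fin d) ℝ) (y : Fin n → ℝ)
    (β : ℝ) (ℓ : (Fin n → ℝ) → ℝ) (D : Fin P → Matrix (Fin n) (Fin n) ℝ) : Set ℝ :=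
  {c : ℝ | ∃ v w : Fin P → Fin d → ℝ,
    (∀ i, ∀ k, 0 ≤ (((2 : ℝ) • D i - 1) *ᵥ (X *ᵥ v i)) k) ∧
    (∀ i, ∀ k, 0 ≤ (((2 : ℝ) • D i - 1) *ᵥ (X *ᵥ w i)) k) ∧
    c = ℓ (∑ i, D i *ᵥ (X *ᵥ (v i - w i))) +
      β * ∑ i, (Real.sqrt (∑ h, (v i h) ^ 2) + Real.sqrt (∑ h, (w i h) ^ 2))}

/-- The standard Gaussian measure on `ℝ^d`. -/
def stdGaussian (d : ℕ) : Measure (Fin d → ℝ) :=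
  Measure.pi fun _ : Fin d => gaussianReal 0 1

variable {n d : ℕ} (X : Matrix (Fin n) (Fin d) ℝ) (y : Fin n → ℝ) (β : ℝ)
  (ℓ : (Fin n → ℝ) → ℝ)

lemma progVals_nonempty {P : ℕ} (D : Fin P → Matrix (Fin n) (Fin n) ℝ) :
    (progVals X y β ℓ D).Nonempty := by
  refine ⟨_, 0, 0, ?_, ?_, rfl⟩ <;>
  · intro i k
    simp [Matrix.mulVec_zero]

lemma progVals_mono {P Q : ℕ} (e : Fin P → Fin Q) (he : Function.Injective e)
    (D : Fin Q → Matrix (Fin n) (Fin n) ℝ) :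
    progVals X y β ℓ (fun i => D (e i)) ⊆ progVals X y β ℓ D := by
  rintro c ⟨v, w, hv, hw, hc⟩
  refine ⟨Function.extend e v 0, Function.extend e w 0, ?_, ?_, ?_⟩
  · intro j k
    by_cases h : ∃ i, e i = j
    · obtain ⟨i, rfl⟩ := h
      rw [he.extend_apply]
      exact hv i k
    · rw [Function.extend_apply' _ _ _ h]
      simp [Matrix.mulVec_zero]
  · intro j k
    by_cases h : ∃ i, e i = j
    · obtain ⟨i, rfl⟩ := h
      rw [he.extend_apply]
      exact hw i k
    · rw [Function.extend_apply' _ _ _ h]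
      simp [Matrix.mulVec_zero]
  · have hsum : ∀ (M : Type) (_ : AddCommMonoid M) (F : Fin Q → (Fin d → ℝ) → (Fin d → ℝ) → M),
        (∀ j, F j 0 0 = 0) →
        ∑ j, F j (Function.extend e v 0 j) (Function.extend e w 0 j) = ∑ i, F (e i) (v i) (w i) := by
      intro M _ F hF
      set G : Fin Q → M := fun j => F j (Function.extend e v 0 j) (Function.extend e w 0 j) with hG
      have h1 : ∑ j, G j = ∑ j ∈ Finset.univ.image e, G j := by
        refine (Finset.sum_subset (Finset.subset_univ _) ?_).symm
        intro j _ hj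
        have h : ¬ ∃ i, e i = j := by
          rintro ⟨i, hi⟩
          exact hj (Finset.mem_image.2 ⟨i, Finset.mem_univ i, hi⟩)
        simp only [hG, Function.extend_apply' _ _ _ h]
        exact hF j
      rw [h1, Finset.sum_image (fun a _ b _ h => he h)]
      simp only [hG, he.extend_apply]
    rw [hc]
    congr 1
    · congr 1
      exact (hsum _ _ (fun j a b => D j *ᵥ (X *ᵥ (a - b))) (by simp [Matrix.mulVec_zero])).symm
    · congr 1
      exact (hsum _ _ (fun _ a b => Real.sqrt (∑ h, (a h) ^ 2) + Real.sqrt (∑ h, (b h) ^ 2))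
        (by simp)).symm

lemma carath {N : ℕ} (z : Fin N → (Fin n → ℝ) × ℝ) (μ0 : Fin N → ℝ) (hμ0 : ∀ i, 0 ≤ μ0 i) :
    ∃ lam : Fin N → ℝ, (∀ i, 0 ≤ lam i) ∧ ∑ i, lam i • z i = ∑ i, μ0 i • z i ∧
      (Finset.univ.filter fun i => lam i ≠ 0).card ≤ n + 1 := by
  suffices H : ∀ k (μ : Fin N → ℝ), (Finset.univ.filter fun i => μ i ≠ 0).card ≤ k →
      (∀ i, 0 ≤ μ i) → ∃ lam : Fin N → ℝ, (∀ i, 0 ≤ lam i) ∧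
      ∑ i, lam i • z i = ∑ i, μ i • z i ∧
      (Finset.univ.filter fun i => lam i ≠ 0).card ≤ n + 1 by
    exact H _ μ0 le_rfl hμ0
  intro k
  induction k with
  | zero =>
    intro μ hcard hμ
    exact ⟨μ, hμ, rfl, hcard.trans (Nat.zero_le _)⟩
  | succ k ih =>
    intro μ hcard hμ
    by_cases hle : (Finset.univ.filter fun i => μ i ≠ 0).card ≤ n + 1
    · exact ⟨μ, hμ, rfl, hle⟩
    push_neg at hle
    set s := Finset.univ.filter fun i => μ i ≠ 0 with hs
    -- linear dependence
    have hdep : ¬ LinearIndependent ℝ (fun i : s => z i) := by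
      intro hli
      have := hli.fintype_card_le_finrank
      rw [Fintype.card_coe] at this
      have hfr : Module.finrank ℝ ((Fin n → ℝ) × ℝ) = n + 1 := by
        simp [Module.finrank_prod]
      omega
    obtain ⟨g, hgsum, i₁, hgi₁⟩ := Fintype.not_linearIndependent_iff.1 hdep
    have key : ∃ ν : Fin N → ℝ, (∑ i, ν i • z i = 0) ∧ (∀ i, i ∉ s → ν i = 0) ∧ ∃ i, 0 < ν i := by
      set ν : Fin N → ℝ := fun i => if h : i ∈ s then g ⟨i, h⟩ else 0 with hν
      have hsupp : ∀ i, i ∉ s → ν i = 0 := fun i hi => dif_neg hi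
      have hsum : ∑ i, ν i • z i = 0 := by
        rw [← Finset.sum_subset (Finset.subset_univ s)
          (fun i _ hi => by rw [hsupp i hi, zero_smul]), ← Finset.sum_attach s (fun i => ν i • z i)]
        rw [← hgsum]
        refine Finset.sum_congr rfl fun i _ => ?_
        rw [hν]
        simp [i.2]
      by_cases hp : ∃ i, 0 < ν i
      · exact ⟨ν, hsum, hsupp, hp⟩
      · push_neg at hp
        refine ⟨-ν, by simpa using hsum, fun i hi => by simp [hsupp i hi], ⟨i₁, ?_⟩⟩
        have hne : ν i₁ ≠ 0 := by simpa [hν, i₁.2] using hgi₁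
        simp only [Pi.neg_apply]
        exact neg_pos.2 (lt_of_le_of_ne (hp i₁) hne)
    obtain ⟨ν, hνsum, hνsupp, hνpos⟩ := key
    have hIne : (Finset.univ.filter fun i => 0 < ν i).Nonempty := by
      obtain ⟨i, hi⟩ := hνpos
      exact ⟨i, by simp [hi]⟩
    obtain ⟨i0, hi0mem, hmin⟩ := Finset.exists_min_image _ (fun i => μ i / ν i) hIne
    have hi0pos : 0 < ν i0 := (Finset.mem_filter.1 hi0mem).2
    set t := μ i0 / ν i0 with htd
    have ht : 0 ≤ t := div_nonneg (hμ _) hi0pos.le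
    set lam : Fin N → ℝ := fun i => μ i - t * ν i with hlam
    have hlamnn : ∀ i, 0 ≤ lam i := by
      intro i
      by_cases hp : 0 < ν i
      · have := hmin i (by simp [hp])
        have : t * ν i ≤ μ i := by
          rw [htd]
          calc μ i0 / ν i0 * ν i ≤ μ i / ν i * ν i := by
                apply mul_le_mul_of_nonneg_right _ hp.le
                exact hmin i (by simp [hp])
            _ = μ i := div_mul_cancel₀ _ (ne_of_gt hp)
        simp [hlam]; linarith
      · push_neg at hp
        have : t * ν i ≤ 0 := mul_nonpos_of_nonneg_of_nonpos ht hp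
        have := hμ i
        simp [hlam]; linarith
    have hlamsum : ∑ i, lam i • z i = ∑ i, μ i • z i := by
      simp only [hlam, sub_smul, Finset.sum_sub_distrib]
      have h0 : ∑ x : Fin N, (t * ν x) • z x = 0 := by
        simp only [mul_smul, ← Finset.smul_sum, hνsum, smul_zero]
      rw [h0, sub_zero]
    have hlamsupp : (Finset.univ.filter fun i => lam i ≠ 0) ⊆ s.erase i0 := by
      intro i hi
      simp only [Finset.mem_filter, Finset.mem_univ, true_and] at hi
      refine Finset.mem_erase.2 ⟨?_, ?_⟩
      · intro h
        apply hi
        rw [h]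
        show μ i0 - t * ν i0 = 0
        rw [htd, div_mul_cancel₀ _ (ne_of_gt hi0pos)]
        ring
      · by_contra hns
        apply hi
        show μ i - t * ν i = 0
        rw [hνsupp i hns]
        have : μ i = 0 := by
          by_contra hmu
          exact hns (by simp [hs, hmu])
        rw [this]; ring
    have hi0s : i0 ∈ s := by
      by_contra h
      exact absurd (hνsupp i0 h) (ne_of_gt hi0pos)
    have hcard' : (Finset.univ.filter fun i => lam i ≠ 0).card ≤ k := by
      have h1 := Finset.card_le_card hlamsupp
      have h2 : (s.erase i0).card = s.card - 1 := Finset.card_erase_of_mem hi0s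
      omega
    obtain ⟨lam', h1, h2, h3⟩ := ih lam hcard' hlamnn
    exact ⟨lam', h1, h2.trans hlamsum, h3⟩

lemma sqrt_sum_smul (t : ℝ) (ht : 0 ≤ t) (x : Fin d → ℝ) :
    Real.sqrt (∑ h, (t • x) h ^ 2) = t * Real.sqrt (∑ h, x h ^ 2) := by
  have : ∑ h, (t • x) h ^ 2 = t ^ 2 * ∑ h, x h ^ 2 := by
    rw [Finset.mul_sum]
    refine Finset.sum_congr rfl fun h _ => ?_
    simp [mul_pow]
  rw [this, Real.sqrt_mul (sq_nonneg t), Real.sqrt_sq ht]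

lemma progVals_reduce {N : ℕ} (D : Fin N → Matrix (Fin n) (Fin n) ℝ) (c : ℝ)
    (hc : c ∈ progVals X y β ℓ D) :
    ∃ S : Finset (Fin N), S.card ≤ n + 1 ∧ ∃ v w : Fin N → Fin d → ℝ,
      (∀ i, ∀ k, 0 ≤ (((2 : ℝ) • D i - 1) *ᵥ (X *ᵥ v i)) k) ∧
      (∀ i, ∀ k, 0 ≤ (((2 : ℝ) • D i - 1) *ᵥ (X *ᵥ w i)) k) ∧
      (∀ i, i ∉ S → v i = 0 ∧ w i = 0) ∧
      c = ℓ (∑ i, D i *ᵥ (X *ᵥ (v i - w i))) +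
        β * ∑ i, (Real.sqrt (∑ h, (v i h) ^ 2) + Real.sqrt (∑ h, (w i h) ^ 2)) := by
  obtain ⟨v, w, hv, hw, hcv⟩ := hc
  set z : Fin N → (Fin n → ℝ) × ℝ := fun i =>
    (D i *ᵥ (X *ᵥ (v i - w i)),
      Real.sqrt (∑ h, (v i h) ^ 2) + Real.sqrt (∑ h, (w i h) ^ 2)) with hz
  obtain ⟨lam, hlnn, hlsum, hlcard⟩ := carath z (fun _ => 1) (fun _ => zero_le_one)
  simp only [one_smul] at hlsum
  refine ⟨Finset.univ.filter fun i => lam i ≠ 0, hlcard,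
    fun i => lam i • v i, fun i => lam i • w i, ?_, ?_, ?_, ?_⟩
  · intro i k
    rw [Matrix.mulVec_smul, Matrix.mulVec_smul]
    exact mul_nonneg (hlnn i) (hv i k)
  · intro i k
    rw [Matrix.mulVec_smul, Matrix.mulVec_smul]
    exact mul_nonneg (hlnn i) (hw i k)
  · intro i hi
    have : lam i = 0 := by
      by_contra h
      exact hi (by simp [h])
    simp [this]
  · have h1 : ∀ i : Fin N, D i *ᵥ (X *ᵥ (lam i • v i - lam i • w i)) = (lam i • z i).1 := by
      intro i
      rw [← smul_sub, Matrix.mulVec_smul, Matrix.mulVec_smul]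
      rfl
    have hfst : ∑ i, D i *ᵥ (X *ᵥ (lam i • v i - lam i • w i)) =
        ∑ i, D i *ᵥ (X *ᵥ (v i - w i)) := by
      calc ∑ i, D i *ᵥ (X *ᵥ (lam i • v i - lam i • w i)) = ∑ i, (lam i • z i).1 := by
            simp only [h1]
        _ = (∑ i, lam i • z i).1 := by rw [Prod.fst_sum]
        _ = (∑ i, z i).1 := by rw [hlsum]
        _ = ∑ i, (z i).1 := by rw [Prod.fst_sum]
        _ = ∑ i, D i *ᵥ (X *ᵥ (v i - w i)) := rfl
    have h2 : ∀ i : Fin N, Real.sqrt (∑ h, (lam i • v i) h ^ 2) +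
        Real.sqrt (∑ h, (lam i • w i) h ^ 2) = (lam i • z i).2 := by
      intro i
      rw [sqrt_sum_smul _ (hlnn i), sqrt_sum_smul _ (hlnn i)]
      show _ = lam i • (z i).2
      rw [hz]
      simp [smul_eq_mul]
      ring
    have hsnd : ∑ i, (Real.sqrt (∑ h, (lam i • v i) h ^ 2) +
        Real.sqrt (∑ h, (lam i • w i) h ^ 2)) =
        ∑ i, (Real.sqrt (∑ h, (v i h) ^ 2) + Real.sqrt (∑ h, (w i h) ^ 2)) := by
      calc ∑ i, (Real.sqrt (∑ h, (lam i • v i) h ^ 2) + Real.sqrt (∑ h, (lam i • w i) h ^ 2))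
          = ∑ i, (lam i • z i).2 := by simp only [h2]
        _ = (∑ i, lam i • z i).2 := by rw [Prod.snd_sum]
        _ = (∑ i, z i).2 := by rw [hlsum]
        _ = ∑ i, (z i).2 := by rw [Prod.snd_sum]
        _ = ∑ i, (Real.sqrt (∑ h, (v i h) ^ 2) + Real.sqrt (∑ h, (w i h) ^ 2)) := rfl
    rw [hcv]
    simp only []
    rw [hfst, hsnd]

lemma progVals_drop {Ps : ℕ} (D : Fin (Ps + 1) → Matrix (Fin n) (Fin n) ℝ) (c : ℝ)
    (hc : c ∈ progVals X y β ℓ D) :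
    ∃ S : Finset (Fin (Ps + 1)), S.card ≤ n + 1 ∧
      ∀ j ∉ S, c ∈ progVals X y β ℓ (fun i : Fin Ps => D (j.succAbove i)) := by
  obtain ⟨S, hScard, v, w, hv, hw, hsupp, hcv⟩ := progVals_reduce X y β ℓ D c hc
  refine ⟨S, hScard, fun j hj => ?_⟩
  obtain ⟨hvj, hwj⟩ := hsupp j hj
  refine ⟨fun i => v (j.succAbove i), fun i => w (j.succAbove i),
    fun i k => hv _ k, fun i k => hw _ k, ?_⟩
  rw [hcv]
  congr 1
  · congr 1
    rw [Fin.sum_univ_succAbove (fun i => D i *ᵥ (X *ᵥ (v i - w i))) j]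
    rw [hvj, hwj]
    simp [Matrix.mulVec_zero]
  · congr 1
    rw [Fin.sum_univ_succAbove
      (fun i => Real.sqrt (∑ h, (v i h) ^ 2) + Real.sqrt (∑ h, (w i h) ^ 2)) j]
    rw [hvj, hwj]
    simp

lemma essential_card_le {Ps : ℕ} (D : Fin (Ps + 1) → Matrix (Fin n) (Fin n) ℝ) :
    (Finset.univ.filter fun j : Fin (Ps + 1) => sInf (progVals X y β ℓ D) <
      sInf (progVals X y β ℓ (fun i : Fin Ps => D (j.succAbove i)))).card ≤ n + 1 := by
  by_contra hcon
  push_neg at hcon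
  set T := Finset.univ.filter fun j : Fin (Ps + 1) => sInf (progVals X y β ℓ D) <
      sInf (progVals X y β ℓ (fun i : Fin Ps => D (j.succAbove i))) with hT
  have hsub : ∀ j : Fin (Ps + 1),
      progVals X y β ℓ (fun i : Fin Ps => D (j.succAbove i)) ⊆ progVals X y β ℓ D :=
    fun j => progVals_mono X y β ℓ _ (Fin.succAbove_right_injective) D
  have hbdd : ∀ j ∈ T, BddBelow (progVals X y β ℓ (fun i : Fin Ps => D (j.succAbove i))) := by
    intro j hj
    by_cases hba : BddBelow (progVals X y β ℓ D)
    · exact hba.mono (hsub j)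
    · by_contra hnb
      have h1 := Real.sInf_of_not_bddBelow hba
      have h2 := Real.sInf_of_not_bddBelow hnb
      have := (Finset.mem_filter.1 hj).2
      rw [h1, h2] at this
      exact lt_irrefl _ this
  have hTne : T.Nonempty := Finset.card_pos.1 (by omega)
  obtain ⟨j₀, hj₀T, hmin⟩ := Finset.exists_min_image T
    (fun j => sInf (progVals X y β ℓ (fun i : Fin Ps => D (j.succAbove i)))) hTne
  set m := sInf (progVals X y β ℓ (fun i : Fin Ps => D (j₀.succAbove i))) with hm
  have hex : ∃ c ∈ progVals X y β ℓ D, c < m := by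
    by_cases hba : BddBelow (progVals X y β ℓ D)
    · by_contra hno
      push_neg at hno
      have : m ≤ sInf (progVals X y β ℓ D) :=
        le_csInf (progVals_nonempty X y β ℓ D) hno
      have h2 := (Finset.mem_filter.1 hj₀T).2
      rw [← hm] at h2
      linarith
    · obtain ⟨c, hcmem, hclt⟩ := (not_bddBelow_iff.1 hba) m
      exact ⟨c, hcmem, hclt⟩
  obtain ⟨c, hcmem, hcm⟩ := hex
  obtain ⟨S, hScard, hSdrop⟩ := progVals_drop X y β ℓ D c hcmem
  have : ¬ T ⊆ S := fun hTS => absurd (Finset.card_le_card hTS) (by omega)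
  obtain ⟨j, hjT, hjS⟩ := Finset.not_subset.1 this
  have hcj := hSdrop j hjS
  have h1 : sInf (progVals X y β ℓ (fun i : Fin Ps => D (j.succAbove i))) ≤ c :=
    csInf_le (hbdd j hjT) hcj
  have h2 := hmin j hjT
  linarith

lemma progVals_comp_equiv {P : ℕ} (e : Fin P ≃ Fin P) (D : Fin P → Matrix (Fin n) (Fin n) ℝ) :
    progVals X y β ℓ (fun i => D (e i)) = progVals X y β ℓ D := by
  refine Set.Subset.antisymm (progVals_mono X y β ℓ e e.injective D) ?_
  have h := progVals_mono X y β ℓ e.symm e.symm.injective (fun i => D (e i))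
  simpa using h

lemma progVals_eq_of_range_eq {P Q : ℕ} (f g : Fin P → Fin Q) (hf : Function.Injective f)
    (hr : Set.range f = Set.range g) (D : Fin Q → Matrix (Fin n) (Fin n) ℝ) :
    progVals X y β ℓ (fun i => D (f i)) = progVals X y β ℓ (fun i => D (g i)) := by
  have hex : ∀ i, ∃ z, g z = f i := by
    intro i
    have : f i ∈ Set.range g := hr ▸ Set.mem_range_self i
    exact this
  choose e he using hex
  have hinj : Function.Injective e := fun i i' h => hf (by rw [← he, ← he, h])
  have hbij : Function.Bijective e := (Finite.injective_iff_bijective).1 hinj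
  have h1 : (fun i => D (f i)) = fun i => D (g (e i)) := funext fun i => by rw [he]
  rw [h1]
  exact progVals_comp_equiv X y β ℓ (Equiv.ofBijective e hbij) (fun i => D (g i))

instance stdGaussian_prob (d : ℕ) : IsProbabilityMeasure (stdGaussian d) :=
  show IsProbabilityMeasure (Measure.pi fun _ : Fin d => gaussianReal 0 1) from inferInstance

/-- if `P_s ≥ (n+1)/(ψξ) − 1` then, with probability at least `1 − ξ` over the
i.i.d. Gaussian draws `a_1, …, a_{P_s}`, the conditional probability over the independent draw
of `a_{P_s+1}` that the enlarged sampled convex program has a strictly smaller optimal value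
is at most `ψ`. -/
theorem statement_4 {n d Ps : ℕ}
    (X : Matrix (Fin n) (Fin d) ℝ) (y : Fin n → ℝ) (β : ℝ) (hβ : 0 < β)
    (ℓ : (Fin n → ℝ) → ℝ) (hℓ : ConvexOn ℝ Set.univ ℓ)
    (ψ ξ : ℝ) (hψ : ψ ∈ Set.Ioo (0 : ℝ) 1) (hξ : ξ ∈ Set.Ioo (0 : ℝ) 1)
    (hPs : ((n : ℝ) + 1) / (ψ * ξ) - 1 ≤ (Ps : ℝ)) :
    ENNReal.ofReal (1 - ξ) ≤
      (Measure.pi fun _ : Fin Ps => stdGaussian d)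
        {a : Fin Ps → Fin d → ℝ |
          stdGaussian d
            {b : Fin d → ℝ |
              sInf (progVals X y β ℓ (fun i : Fin (Ps + 1) =>
                  if h : (i : ℕ) < Ps then Dmat X (a ⟨i, h⟩) else Dmat X b)) <
                sInf (progVals X y β ℓ (fun i : Fin Ps => Dmat X (a i)))}
            ≤ ENNReal.ofReal ψ} := by
  classical
  obtain ⟨hψ0, hψ1⟩ := hψ
  obtain ⟨hξ0, hξ1⟩ := hξ
  set ν := stdGaussian d with hνdef
  set μP := Measure.pi fun _ : Fin Ps => ν with hμPdef
  set μ := Measure.pi fun _ : Fin (Ps + 1) => ν with hμdef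
  haveI : IsProbabilityMeasure μP := by rw [hμPdef]; infer_instance
  haveI : IsProbabilityMeasure μ := by rw [hμdef]; infer_instance
  -- the events
  set E : Fin (Ps + 1) → Set (Fin (Ps + 1) → Fin d → ℝ) := fun j =>
    {A | sInf (progVals X y β ℓ (fun i => Dmat X (A i))) <
         sInf (progVals X y β ℓ (fun i : Fin Ps => Dmat X (A (j.succAbove i))))} with hE
  -- measurability of the events
  set patt : (Fin d → ℝ) → (Fin n → Bool) := fun a k => decide (0 ≤ (X *ᵥ a) k) with hpattdef
  set DofB : (Fin n → Bool) → Matrix (Fin n) (Fin n) ℝ :=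
    fun q => Matrix.diagonal fun k => if q k then 1 else 0 with hDofBdef
  have hDofB : ∀ a, Dmat X a = DofB (patt a) := by
    intro a
    simp only [Dmat, hDofBdef, hpattdef, decide_eq_true_eq]
  have hpatt : Measurable patt := by
    refine measurable_pi_lambda _ fun k => ?_
    have hg : Measurable (fun a : Fin d → ℝ => (X *ᵥ a) k) := by
      have : (fun a : Fin d → ℝ => (X *ᵥ a) k) = fun a => ∑ h : Fin d, X k h * a h := rfl
      rw [this]
      exact Finset.measurable_sum _ fun h _ => (measurable_pi_apply h).const_mul _
    have : (fun a => patt a k) = fun a => if 0 ≤ (X *ᵥ a) k then true else false := by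
      funext a
      by_cases h : 0 ≤ (X *ᵥ a) k <;> simp [hpattdef, h]
    rw [this]
    exact Measurable.ite (measurableSet_le measurable_const hg) measurable_const measurable_const
  have hEmeas : ∀ j, MeasurableSet (E j) := by
    intro j
    have hrep : E j = (fun (A : Fin (Ps + 1) → Fin d → ℝ) (i : Fin (Ps + 1)) => patt (A i)) ⁻¹'
        {Q : Fin (Ps + 1) → Fin n → Bool |
          sInf (progVals X y β ℓ (fun i => DofB (Q i))) <
          sInf (progVals X y β ℓ (fun i : Fin Ps => DofB (Q (j.succAbove i))))} := by
      ext A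
      simp only [hE, Set.mem_setOf_eq, Set.mem_preimage, hDofB]
    rw [hrep]
    exact ((Set.toFinite _).measurableSet).preimage
      (measurable_pi_lambda _ fun i => hpatt.comp (measurable_pi_apply i))
  -- exchangeability: all E j have the same measure
  have hEswap : ∀ j, μ (E j) = μ (E (Fin.last Ps)) := by
    intro j
    set σ := Equiv.swap j (Fin.last Ps) with hσ
    have hmp := measurePreserving_piCongrLeft (fun _ : Fin (Ps + 1) => ν) σ
    have hpre := hmp.measure_preimage (hEmeas j).nullMeasurableSet
    have hset : (⇑(MeasurableEquiv.piCongrLeft (fun _ : Fin (Ps + 1) => Fin d → ℝ) σ)) ⁻¹' (E j)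
        = E (Fin.last Ps) := by
      ext A
      have happ : ∀ i, (MeasurableEquiv.piCongrLeft (fun _ : Fin (Ps + 1) => Fin d → ℝ) σ) A i
          = A (σ.symm i) := by
        intro i
        simp [MeasurableEquiv.piCongrLeft, Equiv.piCongrLeft_apply]
      simp only [Set.mem_preimage, hE, Set.mem_setOf_eq, happ]
      have h1 : progVals X y β ℓ (fun i => Dmat X (A (σ.symm i)))
          = progVals X y β ℓ (fun i => Dmat X (A i)) :=
        progVals_comp_equiv X y β ℓ σ.symm (fun i => Dmat X (A i))
      have h2 : progVals X y β ℓ (fun i : Fin Ps => Dmat X (A (σ.symm (j.succAbove i))))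
          = progVals X y β ℓ (fun i : Fin Ps => Dmat X (A ((Fin.last Ps).succAbove i))) := by
        refine progVals_eq_of_range_eq X y β ℓ
          (fun i => σ.symm (j.succAbove i)) ((Fin.last Ps).succAbove)
          (σ.symm.injective.comp Fin.succAbove_right_injective) ?_
          (fun q => Dmat X (A q))
        have hra : Set.range (fun i => σ.symm (j.succAbove i)) = ⇑σ.symm '' Set.range j.succAbove := by
          rw [← Set.range_comp]
          rfl
        rw [hra, Fin.range_succAbove, Fin.range_succAbove]
        rw [Set.image_compl_eq σ.symm.bijective, Set.image_singleton]
        congr 1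
        rw [hσ, Equiv.symm_swap, Equiv.swap_apply_left]
      rw [h1, h2]
    rw [hset] at hpre
    exact hpre.symm
  -- counting: at most n+1 essential indices
  have hcount : ∀ A : Fin (Ps + 1) → Fin d → ℝ,
      ∑ j : Fin (Ps + 1), (E j).indicator (1 : (Fin (Ps + 1) → Fin d → ℝ) → ENNReal) A
        ≤ ((n + 1 : ℕ) : ENNReal) := by
    intro A
    have h1 : ∑ j : Fin (Ps + 1), (E j).indicator (1 : (Fin (Ps + 1) → Fin d → ℝ) → ENNReal) A
        = ((Finset.univ.filter fun j => A ∈ E j).card : ENNReal) := by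
      rw [← Finset.sum_boole]
      refine Finset.sum_congr rfl fun j _ => ?_
      by_cases h : A ∈ E j <;> simp [Set.indicator_apply, h, Pi.one_apply]
    rw [h1]
    have h2 : (Finset.univ.filter fun j => A ∈ E j)
        = Finset.univ.filter fun j : Fin (Ps + 1) =>
            sInf (progVals X y β ℓ (fun i => Dmat X (A i))) <
            sInf (progVals X y β ℓ (fun i : Fin Ps => Dmat X (A (j.succAbove i)))) := by
      ext j
      simp [hE]
    rw [h2]
    exact_mod_cast Nat.cast_le.2 (essential_card_le X y β ℓ (fun i => Dmat X (A i)))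
  have hsum : ∑ j : Fin (Ps + 1), μ (E j) ≤ ((n + 1 : ℕ) : ENNReal) := by
    calc ∑ j : Fin (Ps + 1), μ (E j)
        = ∑ j : Fin (Ps + 1), ∫⁻ A, (E j).indicator 1 A ∂μ :=
          Finset.sum_congr rfl fun j _ => (lintegral_indicator_one (hEmeas j)).symm
      _ = ∫⁻ A, ∑ j : Fin (Ps + 1), (E j).indicator 1 A ∂μ :=
          (lintegral_finset_sum _ fun j _ => (measurable_one.indicator (hEmeas j))).symm
      _ ≤ ∫⁻ _, ((n + 1 : ℕ) : ENNReal) ∂μ := lintegral_mono fun A => hcount A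
      _ = ((n + 1 : ℕ) : ENNReal) := by simp [lintegral_const]
  have hlast : ((Ps + 1 : ℕ) : ENNReal) * μ (E (Fin.last Ps)) ≤ ((n + 1 : ℕ) : ENNReal) := by
    calc ((Ps + 1 : ℕ) : ENNReal) * μ (E (Fin.last Ps))
        = ∑ _j : Fin (Ps + 1), μ (E (Fin.last Ps)) := by
          simp [Finset.sum_const, Finset.card_univ, nsmul_eq_mul]
      _ = ∑ j : Fin (Ps + 1), μ (E j) := Finset.sum_congr rfl fun j _ => (hEswap j).symm
      _ ≤ _ := hsum
  -- Fubini: slice the event at the last coordinate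
  set π : (Fin (Ps + 1) → Fin d → ℝ) ≃ᵐ (Fin d → ℝ) × (Fin Ps → Fin d → ℝ) :=
    MeasurableEquiv.piFinSuccAbove (fun _ : Fin (Ps + 1) => Fin d → ℝ) (Fin.last Ps) with hπdef
  set S := ⇑π.symm ⁻¹' (E (Fin.last Ps)) with hSdef
  have hSmeas : MeasurableSet S := (hEmeas _).preimage π.symm.measurable
  have hmp2 := measurePreserving_piFinSuccAbove (fun _ : Fin (Ps + 1) => ν) (Fin.last Ps)
  have hES : μ (E (Fin.last Ps)) = (ν.prod μP) S := by
    have hpre := hmp2.measure_preimage hSmeas.nullMeasurableSet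
    have hπS : ⇑π ⁻¹' S = E (Fin.last Ps) := by
      rw [hSdef, ← Set.preimage_comp, MeasurableEquiv.symm_comp_self, Set.preimage_id]
    rw [← hπdef] at hpre
    rw [hπS] at hpre
    rw [hμdef, hμPdef]
    exact hpre
  have hsymm : ∀ (b : Fin d → ℝ) (a : Fin Ps → Fin d → ℝ), π.symm (b, a) = Fin.snoc a b := by
    intro b a
    simp [hπdef, MeasurableEquiv.piFinSuccAbove, Fin.insertNth_last', Fin.snocEquiv]
  have hslice : ∀ a : Fin Ps → Fin d → ℝ, ((fun b => (b, a)) ⁻¹' S) =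
      {b : Fin d → ℝ |
        sInf (progVals X y β ℓ (fun i : Fin (Ps + 1) =>
            if h : (i : ℕ) < Ps then Dmat X (a ⟨i, h⟩) else Dmat X b)) <
          sInf (progVals X y β ℓ (fun i : Fin Ps => Dmat X (a i)))} := by
    intro a
    ext b
    simp only [hSdef, Set.mem_preimage, hsymm b a, hE, Set.mem_setOf_eq]
    have h1 : (fun i : Fin (Ps + 1) => Dmat X (Fin.snoc (α := fun _ : Fin (Ps + 1) => Fin d → ℝ) a b i))
        = fun i : Fin (Ps + 1) => if h : (i : ℕ) < Ps then Dmat X (a ⟨i, h⟩) else Dmat X b := by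
      funext i
      by_cases h : (i : ℕ) < Ps
      · rw [dif_pos h]
        congr 1
        simp [Fin.snoc, h]
        rfl
      · have hi : i = Fin.last Ps := by
          apply Fin.ext
          have := i.isLt
          simp only [Fin.val_last]
          omega
        rw [dif_neg h, hi, Fin.snoc_last]
    have h2 : (fun i : Fin Ps => Dmat X (Fin.snoc (α := fun _ : Fin (Ps + 1) => Fin d → ℝ) a b ((Fin.last Ps).succAbove i)))
        = fun i : Fin Ps => Dmat X (a i) := by
      funext i
      rw [Fin.succAbove_last, Fin.snoc_castSucc]
    rw [h1, h2]
  set f : (Fin Ps → Fin d → ℝ) → ENNReal := fun a => ν ((fun b => (b, a)) ⁻¹' S) with hfdef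
  have hfmeas : Measurable f := measurable_measure_prodMk_right hSmeas
  have hFB : (ν.prod μP) S = ∫⁻ a, f a ∂μP := Measure.prod_apply_symm hSmeas
  -- the bound on μ (E last)
  have hreal : (n : ℝ) + 1 ≤ ((Ps : ℝ) + 1) * (ψ * ξ) := by
    have hψξ : 0 < ψ * ξ := mul_pos hψ0 hξ0
    have h' : ((n : ℝ) + 1) / (ψ * ξ) ≤ (Ps : ℝ) + 1 := by linarith
    calc (n : ℝ) + 1 = (((n : ℝ) + 1) / (ψ * ξ)) * (ψ * ξ) :=
          (div_mul_cancel₀ _ hψξ.ne').symm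
      _ ≤ ((Ps : ℝ) + 1) * (ψ * ξ) := mul_le_mul_of_nonneg_right h' hψξ.le
  have hElast : μ (E (Fin.last Ps)) ≤ ENNReal.ofReal (ψ * ξ) := by
    have hc1 : ((n + 1 : ℕ) : ENNReal) ≤ ((Ps + 1 : ℕ) : ENNReal) * ENNReal.ofReal (ψ * ξ) := by
      have e1 : ((Ps + 1 : ℕ) : ENNReal) = ENNReal.ofReal ((Ps : ℝ) + 1) := by
        rw [← ENNReal.ofReal_natCast]
        congr 1
        push_cast
        ring
      have e2 : ((n + 1 : ℕ) : ENNReal) = ENNReal.ofReal ((n : ℝ) + 1) := by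
        rw [← ENNReal.ofReal_natCast]
        congr 1
        push_cast
        ring
      rw [e1, e2, ← ENNReal.ofReal_mul (by positivity)]
      exact ENNReal.ofReal_le_ofReal hreal
    have := le_trans hlast hc1
    rwa [ENNReal.mul_le_mul_iff_right (by exact_mod_cast Nat.succ_ne_zero Ps) (by simp)] at this
  -- Markov inequality
  set G := {a : Fin Ps → Fin d → ℝ | ENNReal.ofReal ψ < f a} with hGdef
  have hGmeas : MeasurableSet G := measurableSet_lt measurable_const hfmeas
  have hGbound : μP G ≤ ENNReal.ofReal ξ := by
    have h1 : μP G ≤ μP {a | ENNReal.ofReal ψ ≤ f a} := by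
      refine measure_mono fun a ha => ?_
      simp only [hGdef, Set.mem_setOf_eq] at ha ⊢
      exact ha.le
    have h2 := mul_meas_ge_le_lintegral₀ (μ := μP) hfmeas.aemeasurable (ENNReal.ofReal ψ)
    have h3 : ENNReal.ofReal ψ * μP G ≤ ENNReal.ofReal ψ * ENNReal.ofReal ξ := by
      calc ENNReal.ofReal ψ * μP G ≤ ENNReal.ofReal ψ * μP {a | ENNReal.ofReal ψ ≤ f a} := by
            exact mul_le_mul_right h1 _
        _ ≤ ∫⁻ a, f a ∂μP := h2
        _ = μ (E (Fin.last Ps)) := by rw [hES, hFB]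
        _ ≤ ENNReal.ofReal (ψ * ξ) := hElast
        _ = ENNReal.ofReal ψ * ENNReal.ofReal ξ := ENNReal.ofReal_mul hψ0.le
    rwa [ENNReal.mul_le_mul_iff_right (by simp only [ne_eq, ENNReal.ofReal_eq_zero, not_le]; exact hψ0)
      ENNReal.ofReal_ne_top] at h3
  -- conclude
  have hgoal : {a : Fin Ps → Fin d → ℝ |
      ν {b : Fin d → ℝ |
          sInf (progVals X y β ℓ (fun i : Fin (Ps + 1) =>
              if h : (i : ℕ) < Ps then Dmat X (a ⟨i, h⟩) else Dmat X b)) <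
            sInf (progVals X y β ℓ (fun i : Fin Ps => Dmat X (a i)))}
        ≤ ENNReal.ofReal ψ} = Gᶜ := by
    ext a
    simp only [hGdef, Set.mem_setOf_eq, Set.mem_compl_iff, not_lt, hfdef, hslice a]
  calc ENNReal.ofReal (1 - ξ) = 1 - ENNReal.ofReal ξ := by
        rw [ENNReal.ofReal_sub _ hξ0.le, ENNReal.ofReal_one]
    _ ≤ 1 - μP G := tsub_le_tsub_left hGbound _
    _ = μP Gᶜ := (prob_compl_eq_one_sub hGmeas).symm
    _ = _ := by rw [← hgoal]
end
end

section
/- Let X ∈ ℝ^{n×d}, y ∈ ℝⁿ, β > 0, and let ℓ(·, y) : ℝⁿ → ℝ be convex. Let D_1, …, D_P be all distinct diagonal matrices of the form diag([Xu ≥ 0]) over u ∈ ℝ^d, and let D_{P+1}, …, D_{P̃} be any additional diagonal matrices with 0/1 diagonal entries (not necessarily of this form). Then the optimal value q̃* of the convex program inf over (v_i, w_i)_{i=1}^{P̃} of ℓ(∑_{i=1}^{P̃} D_i X (v_i − w_i), y) + β ∑_{i=1}^{P̃} (‖v_i‖₂ + ‖w_i‖₂), subject to (2D_i − I_n) X v_i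 ≥ 0 and (2D_i − I_n) X w_i ≥ 0 for all i ∈ [P̃], equals the optimal value q* of the same program formed with only D_1, …, D_P. -/
/-!
Let `D` be a diagonal `0/1` matrix and `z` a vector with `(2D - I) z ≥ 0`. Then `D` keeps exactly
the positive entries of `z` (and possibly some zero ones), so `D z = diag([z ≥ 0]) z`. Hence each
feasible block `(D_i, v_i)` of the enlarged program may be moved to the block of the activation
pattern `diag([X v_i ≥ 0])`, which is one of `D_1, …, D_P`. Adding up the blocks moved to the same
pattern preserves feasibility, because the constraints are convex cones, and preserves the model
output `∑ D_i X v_i`; by the triangle inequality it does not increase the penalty. So every value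
of the enlarged program is bounded below by a value of the small one, and padding with zero blocks
shows that every value of the small program is a value of the enlarged one.
-/

open Matrix Finset

noncomputable section

namespace ReluConvexProgram

variable {m p : Type*} [Fintype m] [DecidableEq m] [Fintype p]

def activationPattern (z : m → ℝ) : Matrix m m ℝ :=
  diagonal fun k => if 0 ≤ z k then 1 else 0

def SignConsistent (D : Matrix m m ℝ) (z : m → ℝ) : Prop :=
  ∀ k, 0 ≤ (((2 : ℝ) • D - 1) *ᵥ z) k

def objectiveValues {ι : Type*} [Fintype ι] (X : Matrix m p ℝ) (ℓ : (m → ℝ) → ℝ) (β : ℝ)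
    (D : ι → Matrix m m ℝ) : Set ℝ :=
  {c | ∃ v w : ι → p → ℝ,
    (∀ i, SignConsistent (D i) (X *ᵥ v i)) ∧ (∀ i, SignConsistent (D i) (X *ᵥ w i)) ∧
    c = ℓ (∑ i, D i *ᵥ (X *ᵥ (v i - w i))) + β * ∑ i, (√(∑ h, v i h ^ 2) + √(∑ h, w i h ^ 2))}

lemma two_smul_diagonal_sub_one_mulVec_apply (q z : m → ℝ) (k : m) :
    (((2 : ℝ) • diagonal q - 1) *ᵥ z) k = (2 * q k - 1) * z k := by
  simp only [sub_mulVec, smul_mulVec, one_mulVec, Pi.sub_apply, Pi.smul_apply, mulVec_diagonal,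
    smul_eq_mul]
  ring

lemma signConsistent_activationPattern (z : m → ℝ) :
    SignConsistent (activationPattern z) z := by
  intro k
  rw [activationPattern, two_smul_diagonal_sub_one_mulVec_apply]
  split_ifs with h <;> nlinarith

lemma signConsistent_zero (D : Matrix m m ℝ) : SignConsistent D 0 := by
  simp [SignConsistent]

lemma SignConsistent.sum {ι : Type*} {D : Matrix m m ℝ} {s : Finset ι} {z : ι → m → ℝ}
    (h : ∀ i ∈ s, SignConsistent D (z i)) : SignConsistent D (∑ i ∈ s, z i) := fun k => by
  rw [mulVec_sum, Finset.sum_apply]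
  exact sum_nonneg fun i hi => h i hi k

lemma diagonal_mulVec_eq_activationPattern_mulVec {q z : m → ℝ}
    (hq : ∀ k, q k = 0 ∨ q k = 1) (hz : SignConsistent (diagonal q) z) :
    diagonal q *ᵥ z = activationPattern z *ᵥ z := by
  funext k
  have hk := hz k
  rw [two_smul_diagonal_sub_one_mulVec_apply] at hk
  rw [activationPattern, mulVec_diagonal, mulVec_diagonal]
  rcases hq k with h | h <;> rw [h] at hk ⊢
  · split_ifs <;> nlinarith
  · have : 0 ≤ z k := by linarith
    simp [this]

lemma sqrt_sum_sq_sum_le {ι : Type*} (s : Finset ι) (f : ι → p → ℝ) :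
    √(∑ h, (∑ i ∈ s, f i) h ^ 2) ≤ ∑ i ∈ s, √(∑ h, f i h ^ 2) := by
  have hnorm : ∀ x : p → ℝ, √(∑ h, x h ^ 2) = ‖WithLp.toLp 2 x‖ := fun x => by
    simp [EuclideanSpace.norm_eq]
  simp only [hnorm, WithLp.toLp_sum]
  exact norm_sum_le _ _

variable {ι κ : Type*} [Fintype ι] [Fintype κ] {X : Matrix m p ℝ}
  {D : ι → Matrix m m ℝ} {D' : κ → Matrix m m ℝ}

lemma exists_regroup (hD : ∀ i, ∃ q : m → ℝ, (∀ k, q k = 0 ∨ q k = 1) ∧ D i = diagonal q)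
    (hD' : ∀ u, ∃ j, D' j = activationPattern (X *ᵥ u))
    {u : ι → p → ℝ} (hu : ∀ i, SignConsistent (D i) (X *ᵥ u i)) :
    ∃ u' : κ → p → ℝ, (∀ j, SignConsistent (D' j) (X *ᵥ u' j)) ∧
      ∑ j, D' j *ᵥ (X *ᵥ u' j) = ∑ i, D i *ᵥ (X *ᵥ u i) ∧
      ∑ j, √(∑ h, u' j h ^ 2) ≤ ∑ i, √(∑ h, u i h ^ 2) := by
  classical
  choose φ hφ using fun i => hD' (u i)
  have hmove : ∀ i, D' (φ i) *ᵥ (X *ᵥ u i) = D i *ᵥ (X *ᵥ u i) := fun i => by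
    obtain ⟨q, hq, hDq⟩ := hD i
    rw [hφ, hDq, diagonal_mulVec_eq_activationPattern_mulVec hq (hDq ▸ hu i)]
  refine ⟨fun j => ∑ i with φ i = j, u i, fun j => ?_, ?_, ?_⟩
  · rw [mulVec_sum]
    refine SignConsistent.sum fun i hi => ?_
    rw [← (mem_filter.1 hi).2, hφ]
    exact signConsistent_activationPattern _
  · calc ∑ j, D' j *ᵥ (X *ᵥ ∑ i with φ i = j, u i)
        = ∑ j, ∑ i with φ i = j, D' (φ i) *ᵥ (X *ᵥ u i) := by
          refine sum_congr rfl fun j _ => ?_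
          rw [mulVec_sum, mulVec_sum]
          exact sum_congr rfl fun i hi => by rw [(mem_filter.1 hi).2]
      _ = ∑ i, D' (φ i) *ᵥ (X *ᵥ u i) := sum_fiberwise _ _ _
      _ = ∑ i, D i *ᵥ (X *ᵥ u i) := sum_congr rfl fun i _ => hmove i
  · calc ∑ j, √(∑ h, (∑ i with φ i = j, u i) h ^ 2)
        ≤ ∑ j, ∑ i with φ i = j, √(∑ h, u i h ^ 2) :=
          sum_le_sum fun j _ => sqrt_sum_sq_sum_le _ _
      _ = ∑ i, √(∑ h, u i h ^ 2) := sum_fiberwise _ _ _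

variable {ℓ : (m → ℝ) → ℝ} {β : ℝ}

lemma exists_le_of_mem_objectiveValues (hβ : 0 ≤ β)
    (hD : ∀ i, ∃ q : m → ℝ, (∀ k, q k = 0 ∨ q k = 1) ∧ D i = diagonal q)
    (hD' : ∀ u, ∃ j, D' j = activationPattern (X *ᵥ u))
    {c : ℝ} (hc : c ∈ objectiveValues X ℓ β D) :
    ∃ c' ∈ objectiveValues X ℓ β D', c' ≤ c := by
  obtain ⟨v, w, hv, hw, rfl⟩ := hc
  obtain ⟨v', hv', hv_out, hv_norm⟩ := exists_regroup hD hD' hv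
  obtain ⟨w', hw', hw_out, hw_norm⟩ := exists_regroup hD hD' hw
  refine ⟨_, ⟨v', w', hv', hw', rfl⟩, ?_⟩
  have hout : ∑ j, D' j *ᵥ (X *ᵥ (v' j - w' j)) = ∑ i, D i *ᵥ (X *ᵥ (v i - w i)) := by
    simp only [mulVec_sub, sum_sub_distrib, hv_out, hw_out]
  rw [hout, sum_add_distrib, sum_add_distrib]
  gcongr

lemma objectiveValues_comp_subset {e : κ → ι} (he : Function.Injective e) :
    objectiveValues X ℓ β (D ∘ e) ⊆ objectiveValues X ℓ β D := by
  rintro c ⟨v, w, hv, hw, rfl⟩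
  have hpad : ∀ u : κ → p → ℝ, (∀ j, SignConsistent (D (e j)) (X *ᵥ u j)) →
      ∀ i, SignConsistent (D i) (X *ᵥ Function.extend e u 0 i) := by
    intro u hu i
    by_cases hi : ∃ j, e j = i
    · obtain ⟨j, rfl⟩ := hi
      rw [he.extend_apply]
      exact hu j
    · rw [Function.extend_apply' _ _ _ hi, Pi.zero_apply, mulVec_zero]
      exact signConsistent_zero _
  refine ⟨Function.extend e v 0, Function.extend e w 0, hpad v hv, hpad w hw, ?_⟩
  congr 3 <;> exact Fintype.sum_of_injective e he _ _
    (fun i hi => by simp [Function.extend_apply' _ _ _ hi]) (fun j => by simp [he.extend_apply])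

end ReluConvexProgram

end

open ReluConvexProgram in
theorem statement_7_general {n d P Pt : ℕ} (hP : P ≤ Pt)
    (X : Matrix (Fin n) (Fin d) ℝ) (β : ℝ) (hβ : 0 < β)
    (ℓ : (Fin n → ℝ) → ℝ)
    (D : Fin Pt → Matrix (Fin n) (Fin n) ℝ)
    -- the first P matrices are exactly the distinct matrices diag([Xu ≥ 0]):
    (hDall : ∀ u : Fin d → ℝ, ∃ i : Fin P,
      D (Fin.castLE hP i) = Matrix.diagonal (fun k => if 0 ≤ (X *ᵥ u) k then (1 : ℝ) else 0))
    -- all matrices are diagonal with 0/1 diagonal entries: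
    (hDdiag : ∀ i : Fin Pt, ∃ q : Fin n → ℝ,
      (∀ k, q k = 0 ∨ q k = 1) ∧ D i = Matrix.diagonal q) :
    sInf {c : ℝ | ∃ v w : Fin Pt → Fin d → ℝ,
        (∀ i, ∀ k, 0 ≤ (((2 : ℝ) • D i - 1) *ᵥ (X *ᵥ v i)) k) ∧
        (∀ i, ∀ k, 0 ≤ (((2 : ℝ) • D i - 1) *ᵥ (X *ᵥ w i)) k) ∧
        c = ℓ (∑ i, D i *ᵥ (X *ᵥ (v i - w i))) +
          β * ∑ i, (Real.sqrt (∑ h, (v i h) ^ 2) + Real.sqrt (∑ h, (w i h) ^ 2))}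
      = sInf {c : ℝ | ∃ v w : Fin P → Fin d → ℝ,
        (∀ i, ∀ k, 0 ≤ (((2 : ℝ) • D (Fin.castLE hP i) - 1) *ᵥ (X *ᵥ v i)) k) ∧
        (∀ i, ∀ k, 0 ≤ (((2 : ℝ) • D (Fin.castLE hP i) - 1) *ᵥ (X *ᵥ w i)) k) ∧
        c = ℓ (∑ i, D (Fin.castLE hP i) *ᵥ (X *ᵥ (v i - w i))) +
          β * ∑ i, (Real.sqrt (∑ h, (v i h) ^ 2) + Real.sqrt (∑ h, (w i h) ^ 2))} := by
  change sInf (objectiveValues X ℓ β D) = sInf (objectiveValues X ℓ β (D ∘ Fin.castLE hP))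
  exact csInf_eq_csInf_of_forall_exists_le
    (fun c hc => exists_le_of_mem_objectiveValues hβ.le hDdiag hDall hc)
    (fun c hc => ⟨c, objectiveValues_comp_subset (Fin.castLE_injective hP) hc, le_rfl⟩)

/-- adding redundant 0/1 diagonal matrices (not necessarily realizable
activation patterns) to the convex program does not change its optimal value. -/
theorem statement_7 {n d P Pt : ℕ} (hP : P ≤ Pt)
    (X : Matrix (Fin n) (Fin d) ℝ) (y : Fin n → ℝ) (β : ℝ) (hβ : 0 < β)
    (ℓ : (Fin n → ℝ) → ℝ) (hℓ : ConvexOn ℝ Set.univ ℓ)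
    (D : Fin Pt → Matrix (Fin n) (Fin n) ℝ)
    -- the first P matrices are exactly the distinct matrices diag([Xu ≥ 0]):
    (hDinj : ∀ i j : Fin P, D (Fin.castLE hP i) = D (Fin.castLE hP j) → i = j)
    (hDform : ∀ i : Fin P, ∃ u : Fin d → ℝ,
      D (Fin.castLE hP i) = Matrix.diagonal (fun k => if 0 ≤ (X *ᵥ u) k then (1 : ℝ) else 0))
    (hDall : ∀ u : Fin d → ℝ, ∃ i : Fin P,
      D (Fin.castLE hP i) = Matrix.diagonal (fun k => if 0 ≤ (X *ᵥ u) k then (1 : ℝ) else 0))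
    -- all matrices are diagonal with 0/1 diagonal entries:
    (hDdiag : ∀ i : Fin Pt, ∃ q : Fin n → ℝ,
      (∀ k, q k = 0 ∨ q k = 1) ∧ D i = Matrix.diagonal q) :
    sInf {c : ℝ | ∃ v w : Fin Pt → Fin d → ℝ,
        (∀ i, ∀ k, 0 ≤ (((2 : ℝ) • D i - 1) *ᵥ (X *ᵥ v i)) k) ∧
        (∀ i, ∀ k, 0 ≤ (((2 : ℝ) • D i - 1) *ᵥ (X *ᵥ w i)) k) ∧
        c = ℓ (∑ i, D i *ᵥ (X *ᵥ (v i - w i))) +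
          β * ∑ i, (Real.sqrt (∑ h, (v i h) ^ 2) + Real.sqrt (∑ h, (w i h) ^ 2))}
      = sInf {c : ℝ | ∃ v w : Fin P → Fin d → ℝ,
        (∀ i, ∀ k, 0 ≤ (((2 : ℝ) • D (Fin.castLE hP i) - 1) *ᵥ (X *ᵥ v i)) k) ∧
        (∀ i, ∀ k, 0 ≤ (((2 : ℝ) • D (Fin.castLE hP i) - 1) *ᵥ (X *ᵥ w i)) k) ∧
        c = ℓ (∑ i, D (Fin.castLE hP i) *ᵥ (X *ᵥ (v i - w i))) +
          β * ∑ i, (Real.sqrt (∑ h, (v i h) ^ 2) + Real.sqrt (∑ h, (w i h) ^ 2))} :=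
  statement_7_general hP X β hβ ℓ D hDall hDdiag
end

section
/- Let X ∈ ℝ^{n×d}, y ∈ ℝⁿ, β > 0, and let ℓ(·, y) : ℝⁿ → ℝ be any function. Let D_1, …, D_P be diagonal matrices with 0/1 diagonal entries, and let (v_i, w_i)_{i=1}^P ⊆ ℝ^d × ℝ^d satisfy (2D_i − I_n) X v_i ≥ 0 and (2D_i − I_n) X w_i ≥ 0 entrywise for all i ∈ [P]. Define network weights: for each i with v_i ≠ 0, a neuron (u, α) = (v_i/√‖v_i‖₂, √‖v_i‖₂); for each i with w_i ≠ 0, a neuron (u, α) = (w_i/√‖w_i‖₂, −√‖w_i‖₂); let (u_j, α_j)_{j=1}^{m*} be the resulting collection, where m* = |{i : v_i ≠ 0}| + |{i : w_i ≠ 0}|. Then ℓ(∑_{i=1}^P D_i X (v_i − w_i), y) + β ∑_{i=1}^P (‖v_i‖₂ + ‖w_i‖₂) = ℓ(∑_{j=1}^{m*} (X u_j)_+ α_j, y) + (β/2) ∑_{j=1}^{m*} (‖u_j‖₂² + α_j²). -/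
open Matrix

noncomputable section

/-- If `D` is a 0/1 diagonal matrix and `(2D - I) z ≥ 0` entrywise, then `D z = relu z`. -/
lemma relu_key {n : ℕ} (D : Matrix (Fin n) (Fin n) ℝ)
    (hD : ∃ q : Fin n → ℝ, (∀ k, q k = 0 ∨ q k = 1) ∧ D = Matrix.diagonal q)
    (z : Fin n → ℝ) (hz : ∀ k, 0 ≤ (((2 : ℝ) • D - 1) *ᵥ z) k) (k : Fin n) :
    (D *ᵥ z) k = max (z k) 0 := by
  obtain ⟨q, hq, rfl⟩ := hD
  have h := hz k
  rw [Matrix.sub_mulVec, Matrix.smul_mulVec] at h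
  simp only [Pi.sub_apply, Pi.smul_apply, Matrix.mulVec_diagonal, Matrix.one_mulVec,
    smul_eq_mul] at h
  rw [Matrix.mulVec_diagonal]
  rcases hq k with h0 | h1
  · rw [h0] at h ⊢
    rw [zero_mul]
    symm
    exact max_eq_right (by linarith)
  · rw [h1] at h ⊢
    rw [one_mul]
    symm
    exact max_eq_left (by linarith)

/-- Per-neuron output identity for the rescaled weight. -/
lemma scale_relu {n d : ℕ} (X : Matrix (Fin n) (Fin d) ℝ) (v : Fin d → ℝ) (hv : v ≠ 0)
    (k : Fin n) :
    max ((X *ᵥ fun h => v h / Real.sqrt (Real.sqrt (∑ h', (v h') ^ 2))) k) 0 *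
      Real.sqrt (Real.sqrt (∑ h', (v h') ^ 2)) = max ((X *ᵥ v) k) 0 := by
  set S : ℝ := ∑ h', (v h') ^ 2 with hS
  have hSpos : 0 < S := by
    have hne : ∃ h, v h ≠ 0 := by
      by_contra hcon
      push_neg at hcon
      exact hv (funext hcon)
    obtain ⟨h0, hh0⟩ := hne
    exact Finset.sum_pos' (fun h _ => sq_nonneg _)
      ⟨h0, Finset.mem_univ _, by positivity⟩
  set c : ℝ := Real.sqrt (Real.sqrt S) with hc
  have hcpos : 0 < c := Real.sqrt_pos.mpr (Real.sqrt_pos.mpr hSpos)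
  have hfun : (fun h => v h / c) = c⁻¹ • v := by
    funext h
    simp [div_eq_inv_mul]
  rw [hfun, Matrix.mulVec_smul, Pi.smul_apply, smul_eq_mul]
  have : max (c⁻¹ * (X *ᵥ v) k) 0 = c⁻¹ * max ((X *ᵥ v) k) 0 := by
    rw [mul_max_of_nonneg _ _ (by positivity : (0:ℝ) ≤ c⁻¹), mul_zero]
  rw [this]
  field_simp

/-- Per-neuron regularizer identity for the rescaled weight. -/
lemma scale_reg {d : ℕ} (v : Fin d → ℝ) :
    (∑ h, (v h / Real.sqrt (Real.sqrt (∑ h', (v h') ^ 2))) ^ 2) +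
      (Real.sqrt (Real.sqrt (∑ h', (v h') ^ 2))) ^ 2
    = 2 * Real.sqrt (∑ h, (v h) ^ 2) := by
  set S : ℝ := ∑ h', (v h') ^ 2 with hS
  have hSnn : 0 ≤ S := Finset.sum_nonneg fun _ _ => sq_nonneg _
  have hc2 : (Real.sqrt (Real.sqrt S)) ^ 2 = Real.sqrt S :=
    Real.sq_sqrt (Real.sqrt_nonneg _)
  rcases eq_or_lt_of_le hSnn with hS0 | hSpos
  · rw [← hS0]
    have : ∀ h, v h = 0 := by
      intro h
      have := (Finset.sum_eq_zero_iff_of_nonneg (fun h _ => sq_nonneg (v h))).mp hS0.symm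
      have := this h (Finset.mem_univ h)
      exact pow_eq_zero_iff (n := 2) (by norm_num) |>.mp this
    simp [this]
  · simp only [div_pow, hc2]
    rw [← Finset.sum_div, ← hS, Real.div_sqrt]
    ring

/-- for feasible `(v_i, w_i)` the convex objective equals the nonconvex
objective evaluated at the recovered network weights. -/
theorem statement_8 {n d P mstar : ℕ}
    (X : Matrix (Fin n) (Fin d) ℝ) (y : Fin n → ℝ) (β : ℝ)
    (ℓ : (Fin n → ℝ) → ℝ)
    (D : Fin P → Matrix (Fin n) (Fin n) ℝ)
    (hDdiag : ∀ i, ∃ q : Fin n → ℝ, (∀ k, q k = 0 ∨ q k = 1) ∧ D i = Matrix.diagonal q)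
    (v w : Fin P → Fin d → ℝ)
    (hv : ∀ i, ∀ k, 0 ≤ (((2 : ℝ) • D i - 1) *ᵥ (X *ᵥ v i)) k)
    (hw : ∀ i, ∀ k, 0 ≤ (((2 : ℝ) • D i - 1) *ᵥ (X *ᵥ w i)) k)
    (hmstar : mstar = (Finset.univ.filter fun i => v i ≠ 0).card +
      (Finset.univ.filter fun i => w i ≠ 0).card)
    (u : Fin mstar → Fin d → ℝ) (α : Fin mstar → ℝ)
    -- (u, α) is the collection of recovered neurons:
    (j₁ : {i : Fin P // v i ≠ 0} → Fin mstar) (j₂ : {i : Fin P // w i ≠ 0} → Fin mstar)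
    (hj₁ : Function.Injective j₁) (hj₂ : Function.Injective j₂)
    (hdisj : ∀ a b, j₁ a ≠ j₂ b)
    (hcover : ∀ j, (∃ a, j₁ a = j) ∨ (∃ b, j₂ b = j))
    (hu₁ : ∀ a, u (j₁ a) = fun h => v a.1 h / Real.sqrt (Real.sqrt (∑ h', (v a.1 h') ^ 2)))
    (hα₁ : ∀ a, α (j₁ a) = Real.sqrt (Real.sqrt (∑ h', (v a.1 h') ^ 2)))
    (hu₂ : ∀ b, u (j₂ b) = fun h => w b.1 h / Real.sqrt (Real.sqrt (∑ h', (w b.1 h') ^ 2)))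
    (hα₂ : ∀ b, α (j₂ b) = - Real.sqrt (Real.sqrt (∑ h', (w b.1 h') ^ 2))) :
    ℓ (∑ i, D i *ᵥ (X *ᵥ (v i - w i))) +
      β * ∑ i, (Real.sqrt (∑ h, (v i h) ^ 2) + Real.sqrt (∑ h, (w i h) ^ 2))
    = ℓ (fun k => ∑ j, max ((X *ᵥ u j) k) 0 * α j) +
      β / 2 * ∑ j, ((∑ h, (u j h) ^ 2) + (α j) ^ 2) := by
  classical
  have hbij : Function.Bijective (Sum.elim j₁ j₂) := by
    constructor
    · intro x y hxy
      cases x with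
      | inl a =>
        cases y with
        | inl a' => exact congrArg Sum.inl (hj₁ hxy)
        | inr b => exact absurd hxy (hdisj a b)
      | inr b =>
        cases y with
        | inl a => exact absurd hxy.symm (hdisj a b)
        | inr b' => exact congrArg Sum.inr (hj₂ hxy)
    · intro j
      rcases hcover j with ⟨a, ha⟩ | ⟨b, hb⟩
      · exact ⟨Sum.inl a, ha⟩
      · exact ⟨Sum.inr b, hb⟩
  have hsplit : ∀ (f : Fin mstar → ℝ),
      ∑ j, f j = ∑ a : {i : Fin P // v i ≠ 0}, f (j₁ a)
        + ∑ b : {i : Fin P // w i ≠ 0}, f (j₂ b) := by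
    intro f
    rw [← Fintype.sum_bijective (Sum.elim j₁ j₂) hbij
      (fun x => f (Sum.elim j₁ j₂ x)) f (fun x => rfl)]
    exact Fintype.sum_sum_type _
  have hfullv : ∀ (f : Fin P → ℝ), (∀ i, v i = 0 → f i = 0) →
      ∑ a : {i : Fin P // v i ≠ 0}, f a.1 = ∑ i, f i := by
    intro f hf
    rw [← Finset.sum_subtype (Finset.univ.filter fun i => v i ≠ 0) (by simp) f]
    exact Finset.sum_filter_of_ne (fun i _ hfi hvi => hfi (hf i hvi))
  have hfullw : ∀ (f : Fin P → ℝ), (∀ i, w i = 0 → f i = 0) →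
      ∑ b : {i : Fin P // w i ≠ 0}, f b.1 = ∑ i, f i := by
    intro f hf
    rw [← Finset.sum_subtype (Finset.univ.filter fun i => w i ≠ 0) (by simp) f]
    exact Finset.sum_filter_of_ne (fun i _ hfi hwi => hfi (hf i hwi))
  -- output equality
  have hout : (fun k => ∑ j, max ((X *ᵥ u j) k) 0 * α j)
      = ∑ i, D i *ᵥ (X *ᵥ (v i - w i)) := by
    funext k
    rw [hsplit (fun j => max ((X *ᵥ u j) k) 0 * α j)]
    have h1 : ∑ a : {i : Fin P // v i ≠ 0}, max ((X *ᵥ u (j₁ a)) k) 0 * α (j₁ a)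
        = ∑ i, (D i *ᵥ (X *ᵥ v i)) k := by
      rw [← hfullv (fun i => (D i *ᵥ (X *ᵥ v i)) k)
        (fun i hi => by simp [hi, Matrix.mulVec_zero])]
      refine Finset.sum_congr rfl fun a _ => ?_
      rw [hu₁, hα₁, scale_relu X (v a.1) a.2 k,
        ← relu_key (D a.1) (hDdiag a.1) _ (hv a.1) k]
    have h2 : ∑ b : {i : Fin P // w i ≠ 0}, max ((X *ᵥ u (j₂ b)) k) 0 * α (j₂ b)
        = - ∑ i, (D i *ᵥ (X *ᵥ w i)) k := by
      rw [← Finset.sum_neg_distrib,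
        ← hfullw (fun i => -((D i *ᵥ (X *ᵥ w i)) k))
        (fun i hi => by simp [hi, Matrix.mulVec_zero])]
      refine Finset.sum_congr rfl fun b _ => ?_
      rw [hu₂, hα₂, mul_neg, scale_relu X (w b.1) b.2 k,
        ← relu_key (D b.1) (hDdiag b.1) _ (hw b.1) k]
    rw [h1, h2, ← sub_eq_add_neg, Finset.sum_apply, ← Finset.sum_sub_distrib]
    refine Finset.sum_congr rfl fun i _ => ?_
    rw [Matrix.mulVec_sub, Matrix.mulVec_sub, Pi.sub_apply]
  -- regularizer equality
  have hreg : ∑ j, ((∑ h, (u j h) ^ 2) + (α j) ^ 2)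
      = ∑ i, 2 * Real.sqrt (∑ h, (v i h) ^ 2) + ∑ i, 2 * Real.sqrt (∑ h, (w i h) ^ 2) := by
    rw [hsplit (fun j => (∑ h, (u j h) ^ 2) + (α j) ^ 2)]
    congr 1
    · rw [← hfullv (fun i => 2 * Real.sqrt (∑ h, (v i h) ^ 2))
        (fun i hi => by simp [hi])]
      refine Finset.sum_congr rfl fun a _ => ?_
      rw [hu₁, hα₁]
      exact scale_reg (v a.1)
    · rw [← hfullw (fun i => 2 * Real.sqrt (∑ h, (w i h) ^ 2))
        (fun i hi => by simp [hi])]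
      refine Finset.sum_congr rfl fun b _ => ?_
      rw [hu₂, hα₂, neg_sq]
      exact scale_reg (w b.1)
  rw [hout, hreg, Finset.sum_add_distrib, ← Finset.mul_sum, ← Finset.mul_sum]
  ring
end
end

section
/- Let y ∈ {−1, 1}, x ∈ ℝ^d, w ∈ ℝ^d, and ε ≥ 0. Then sup over δ ∈ ℝ^d with ‖δ‖∞ ≤ ε of (1 − y (x + δ)ᵀ w)_+ equals (1 − y xᵀ w + ε ‖w‖₁)_+, and the supremum is attained at δ* = −ε · sgn(y w), where sgn is applied entrywise. -/
noncomputable section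

lemma sgn_mul_self (s : ℝ) : Real.sign s * s = |s| := by
  rcases lt_trichotomy s 0 with h | h | h
  · rw [Real.sign_of_neg h, abs_of_neg h]; ring
  · simp [h]
  · rw [Real.sign_of_pos h, abs_of_pos h]; ring

lemma abs_sgn_le_one (s : ℝ) : |Real.sign s| ≤ 1 := by
  rcases lt_trichotomy s 0 with h | h | h
  · rw [Real.sign_of_neg h]; norm_num
  · simp [h, Real.sign_zero]
  · rw [Real.sign_of_pos h]; norm_num

/-- the worst-case hinge loss over an ℓ∞ ball of radius ε equals
`(1 − y xᵀw + ε‖w‖₁)₊`, attained at `δ* = −ε·sgn(y w)`. -/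
theorem statement_10 {d : ℕ}
    (y : ℝ) (hy : y = 1 ∨ y = -1) (x w : Fin d → ℝ) (ε : ℝ) (hε : 0 ≤ ε) :
    IsGreatest {t : ℝ | ∃ δ : Fin d → ℝ, (∀ h, |δ h| ≤ ε) ∧
        t = max (1 - y * ∑ h, (x h + δ h) * w h) 0}
      (max (1 - y * (∑ h, x h * w h) + ε * ∑ h, |w h|) 0) ∧
    (∀ h, |(-ε) * Real.sign (y * w h)| ≤ ε) ∧
    max (1 - y * ∑ h, (x h + (-ε) * Real.sign (y * w h)) * w h) 0
      = max (1 - y * (∑ h, x h * w h) + ε * ∑ h, |w h|) 0 := by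
  have hy1 : |y| = 1 := by rcases hy with h | h <;> simp [h]
  have hδbound : ∀ h : Fin d, |(-ε) * Real.sign (y * w h)| ≤ ε := by
    intro h
    rw [abs_mul, abs_neg, abs_of_nonneg hε]
    calc ε * |Real.sign (y * w h)| ≤ ε * 1 :=
          mul_le_mul_of_nonneg_left (abs_sgn_le_one _) hε
      _ = ε := mul_one ε
  have key : y * ∑ h, (x h + (-ε) * Real.sign (y * w h)) * w h
      = y * (∑ h, x h * w h) - ε * ∑ h, |w h| := by
    rw [Finset.mul_sum, Finset.mul_sum, Finset.mul_sum, ← Finset.sum_sub_distrib]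
    refine Finset.sum_congr rfl fun h _ => ?_
    have h1 : Real.sign (y * w h) * (y * w h) = |y * w h| := sgn_mul_self _
    have h2 : |y * w h| = |w h| := by rw [abs_mul, hy1, one_mul]
    linear_combination (-ε) * h1 + (-ε) * h2
  have attained : max (1 - y * ∑ h, (x h + (-ε) * Real.sign (y * w h)) * w h) 0
      = max (1 - y * (∑ h, x h * w h) + ε * ∑ h, |w h|) 0 := by
    rw [key]; ring_nf
  refine ⟨⟨⟨fun h => (-ε) * Real.sign (y * w h), hδbound, attained.symm⟩, ?_⟩,
    hδbound, attained⟩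
  rintro t ⟨δ, hδ, rfl⟩
  have hsum : y * ∑ h, (x h + δ h) * w h ≥ y * (∑ h, x h * w h) - ε * ∑ h, |w h| := by
    have expand : y * ∑ h, (x h + δ h) * w h
        = y * (∑ h, x h * w h) + ∑ h, y * (δ h * w h) := by
      rw [Finset.mul_sum, Finset.mul_sum, ← Finset.sum_add_distrib]
      exact Finset.sum_congr rfl fun h _ => by ring
    rw [expand]
    have : -(ε * ∑ h, |w h|) ≤ ∑ h, y * (δ h * w h) := by
      rw [Finset.mul_sum, ← Finset.sum_neg_distrib]
      refine Finset.sum_le_sum fun h _ => ?_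
      have h1 : |y * (δ h * w h)| = |δ h| * |w h| := by
        rw [abs_mul, hy1, one_mul, abs_mul]
      have h2 : |δ h| * |w h| ≤ ε * |w h| :=
        mul_le_mul_of_nonneg_right (hδ h) (abs_nonneg _)
      nlinarith [neg_abs_le (y * (δ h * w h))]
    linarith
  exact max_le_max (by linarith) le_rfl
end
end

section
/- Let X ∈ ℝ^{n×d} with rows x_1ᵀ, …, x_nᵀ, let y ∈ {−1, 1}ⁿ, let ε ≥ 0, let D_1, …, D_{P̂} be diagonal matrices with 0/1 diagonal entries (d_{ik} the k-th diagonal entry of D_i), and let (v_i, w_i)_{i=1}^{P̂} ⊆ ℝ^d × ℝ^d. Then sup over Δ ∈ ℝ^{n×d} whose rows δ_1, …, δ_n satisfy ‖δ_k‖∞ ≤ ε of (1/n) ∑_{k=1}^n (1 − y_k ∑_{i=1}^{P̂} d_{ik} (x_k + δ_k)ᵀ (v_i − w_i))_+ equals (1/n) ∑_{k=1}^n (1 − y_k ∑_{i=1}^{P̂} d_{ik} x_kᵀ (v_i − w_i) + ε ‖∑_{i=1}^{P̂} d_{ik} (v_i − w_i)‖₁)_+, and the supremum is attained at Δ* = −ε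 · sgn(∑_{i=1}^{P̂} D_i y (v_i − w_i)ᵀ), where sgn is applied entrywise. Consequently, the bi-level hinge-loss adversarial problem obtained by adding β ∑_{i=1}^{P̂} (‖v_i‖₂ + ‖w_i‖₂) and minimizing over (v_i, w_i) subject to (2D_i − I_n) X v_i ≥ ε ‖v_i‖₁ and (2D_i − I_n) X w_i ≥ ε ‖w_i‖₁ for all i, has the same optimal value as the convex program with the explicit objective above plus the same regularizer and constraints. -/
open Matrix

noncomputable section

/-!
For each sample `k`, write `uₖ = ∑ᵢ dᵢₖ (vᵢ − wᵢ)`; the margin of the perturbed sample is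
`(xₖ + δₖ)ᵀ uₖ`, so the perturbation only enters through the term `−yₖ δₖᵀ uₖ`. By Hölder
this term is at most `|yₖ| ‖δₖ‖∞ ‖uₖ‖₁ ≤ ε ‖uₖ‖₁`, with equality for `δₖ = −ε sgn(yₖ uₖ)`.
As `t ↦ (t)₊` is monotone, the same perturbation maximizes every summand at once, which gives
the closed form of the inner supremum; substituting it into the outer problem changes nothing.
-/

namespace Real

lemma sign_mul_self_eq_abs (t : ℝ) : sign t * t = |t| := by
  rcases lt_trichotomy t 0 with h | rfl | h
  · rw [sign_of_neg h, abs_of_neg h]; ring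
  · simp
  · rw [sign_of_pos h, abs_of_pos h]; ring

lemma abs_sign_le_one (t : ℝ) : |sign t| ≤ 1 := by
  rcases sign_apply_eq t with h | h | h <;> simp [h]

end Real

section HingeMargin

variable {ι : Type*} [Fintype ι]

lemma neg_mul_sum_mul_le_of_abs_le {y ε : ℝ} (hy : |y| ≤ 1) {δ : ι → ℝ}
    (hδ : ∀ h, |δ h| ≤ ε) (u : ι → ℝ) :
    -(y * ∑ h, δ h * u h) ≤ ε * ∑ h, |u h| := by
  rw [Finset.mul_sum, ← Finset.sum_neg_distrib, Finset.mul_sum]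
  refine Finset.sum_le_sum fun h _ => ?_
  calc -(y * (δ h * u h)) ≤ |y| * (|δ h| * |u h|) := by
        rw [← abs_mul, ← abs_mul]; exact neg_le_abs _
    _ ≤ 1 * (ε * |u h|) := by gcongr; exact hδ h
    _ = ε * |u h| := one_mul _

lemma neg_mul_sum_sign_mul_eq {y : ℝ} (hy : |y| = 1) (ε : ℝ) (u : ι → ℝ) :
    -(y * ∑ h, -ε * Real.sign (y * u h) * u h) = ε * ∑ h, |u h| := by
  rw [Finset.mul_sum, ← Finset.sum_neg_distrib, Finset.mul_sum]
  refine Finset.sum_congr rfl fun h _ => ?_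
  calc -(y * (-ε * Real.sign (y * u h) * u h)) = ε * (Real.sign (y * u h) * (y * u h)) := by
        ring
    _ = ε * |u h| := by rw [Real.sign_mul_self_eq_abs, abs_mul, hy, one_mul]

lemma hinge_margin_add_le {y ε : ℝ} (hy : |y| ≤ 1) (x : ι → ℝ) {δ : ι → ℝ}
    (hδ : ∀ h, |δ h| ≤ ε) (u : ι → ℝ) :
    1 - y * ∑ h, (x h + δ h) * u h ≤ 1 - y * ∑ h, x h * u h + ε * ∑ h, |u h| := by
  have := neg_mul_sum_mul_le_of_abs_le hy hδ u
  simp only [add_mul, Finset.sum_add_distrib, mul_add]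
  linarith

lemma hinge_margin_add_sign_eq {y : ℝ} (hy : |y| = 1) (ε : ℝ) (x u : ι → ℝ) :
    1 - y * ∑ h, (x h + -ε * Real.sign (y * u h)) * u h
      = 1 - y * ∑ h, x h * u h + ε * ∑ h, |u h| := by
  have := neg_mul_sum_sign_mul_eq hy ε u
  simp only [add_mul, Finset.sum_add_distrib, mul_add]
  linarith

end HingeMargin

section AdversarialHinge

variable {n : ℕ} {ι κ : Type*} [Fintype κ]
  (X : Matrix (Fin n) ι ℝ) (y : Fin n → ℝ) (ε : ℝ) (dg : κ → Fin n → ℝ) (v w : κ → ι → ℝ)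

def netWeight (k : Fin n) (h : ι) : ℝ := ∑ i, dg i k * (v i h - w i h)

def worstPerturbation : Matrix (Fin n) ι ℝ :=
  fun k h => -ε * Real.sign (∑ i, dg i k * (y k * (v i h - w i h)))

variable {X y ε dg v w}

lemma worstPerturbation_apply (k : Fin n) (h : ι) :
    worstPerturbation y ε dg v w k h = -ε * Real.sign (y k * netWeight dg v w k h) := by
  simp only [worstPerturbation, netWeight, Finset.mul_sum]
  congr 2
  exact Finset.sum_congr rfl fun i _ => by ring

lemma abs_worstPerturbation_le (hε : 0 ≤ ε) (k : Fin n) (h : ι) :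
    |worstPerturbation y ε dg v w k h| ≤ ε := by
  rw [worstPerturbation, abs_mul, abs_neg, abs_of_nonneg hε]
  exact mul_le_of_le_one_right hε (Real.abs_sign_le_one _)

variable [Fintype ι] (X y ε dg v w)

def adversarialHingeLoss (Δ : Matrix (Fin n) ι ℝ) : ℝ :=
  (1 / (n : ℝ)) * ∑ k, max (1 - y k * ∑ i, dg i k * ∑ h, (X k h + Δ k h) * (v i h - w i h)) 0

def robustHingeLoss : ℝ :=
  (1 / (n : ℝ)) * ∑ k, max
    (1 - y k * (∑ i, dg i k * ∑ h, X k h * (v i h - w i h)) +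
      ε * ∑ h, |∑ i, dg i k * (v i h - w i h)|) 0

variable {X y ε dg v w}

lemma sum_mul_sum_mul_sub_eq_sum_mul_netWeight (A : ι → ℝ) (k : Fin n) :
    ∑ i, dg i k * ∑ h, A h * (v i h - w i h) = ∑ h, A h * netWeight dg v w k h := by
  simp only [netWeight, Finset.mul_sum]
  rw [Finset.sum_comm]
  exact Finset.sum_congr rfl fun h _ => Finset.sum_congr rfl fun i _ => by ring

lemma adversarialHingeLoss_le (hy : ∀ k, |y k| ≤ 1) {Δ : Matrix (Fin n) ι ℝ}
    (hΔ : ∀ k h, |Δ k h| ≤ ε) :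
    adversarialHingeLoss X y dg v w Δ ≤ robustHingeLoss X y ε dg v w := by
  unfold adversarialHingeLoss robustHingeLoss
  gcongr with k
  simp only [sum_mul_sum_mul_sub_eq_sum_mul_netWeight]
  exact hinge_margin_add_le (hy k) (X k) (hΔ k) _

lemma adversarialHingeLoss_worstPerturbation (hy : ∀ k, |y k| = 1) :
    adversarialHingeLoss X y dg v w (worstPerturbation y ε dg v w)
      = robustHingeLoss X y ε dg v w := by
  unfold adversarialHingeLoss robustHingeLoss
  congr 1
  refine Finset.sum_congr rfl fun k _ => ?_
  simp only [sum_mul_sum_mul_sub_eq_sum_mul_netWeight, worstPerturbation_apply]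
  rw [hinge_margin_add_sign_eq (hy k)]
  rfl

lemma isGreatest_adversarialHingeLoss (hy : ∀ k, |y k| = 1) (hε : 0 ≤ ε) :
    IsGreatest {t | ∃ Δ : Matrix (Fin n) ι ℝ, (∀ k h, |Δ k h| ≤ ε) ∧
      t = adversarialHingeLoss X y dg v w Δ} (robustHingeLoss X y ε dg v w) :=
  ⟨⟨worstPerturbation y ε dg v w, abs_worstPerturbation_le hε,
      (adversarialHingeLoss_worstPerturbation hy).symm⟩,
    fun _ ⟨_, hΔ, ht⟩ => ht ▸ adversarialHingeLoss_le (fun k => (hy k).le) hΔ⟩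

end AdversarialHinge

theorem statement_11_general {n dd Ph : ℕ}
    (X : Matrix (Fin n) (Fin dd) ℝ) (y : Fin n → ℝ) (hy : ∀ k, y k = 1 ∨ y k = -1)
    (ε : ℝ) (hε : 0 ≤ ε) (β : ℝ)
    (dg : Fin Ph → Fin n → ℝ)
    (v w : Fin Ph → Fin dd → ℝ) :
    -- (a) the inner supremum has the explicit closed form:
    IsGreatest {t : ℝ | ∃ Δ : Matrix (Fin n) (Fin dd) ℝ, (∀ k h, |Δ k h| ≤ ε) ∧
        t = (1 / (n : ℝ)) * ∑ k, max
          (1 - y k * ∑ i, dg i k * ∑ h, (X k h + Δ k h) * (v i h - w i h)) 0}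
      ((1 / (n : ℝ)) * ∑ k, max
        (1 - y k * (∑ i, dg i k * ∑ h, X k h * (v i h - w i h)) +
          ε * ∑ h, |∑ i, dg i k * (v i h - w i h)|) 0) ∧
    -- (b) it is attained at Δ* = −ε·sgn(∑ᵢ Dᵢ y (vᵢ − wᵢ)ᵀ):
    ((∀ k h, |(fun k' h' => -ε * Real.sign (∑ i, dg i k' * (y k' * (v i h' - w i h'))) :
        Matrix (Fin n) (Fin dd) ℝ) k h| ≤ ε) ∧
      (1 / (n : ℝ)) * ∑ k, max
        (1 - y k * ∑ i, dg i k * ∑ h, (X k h +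
          (-ε * Real.sign (∑ i', dg i' k * (y k * (v i' h - w i' h))))) * (v i h - w i h)) 0
      = (1 / (n : ℝ)) * ∑ k, max
        (1 - y k * (∑ i, dg i k * ∑ h, X k h * (v i h - w i h)) +
          ε * ∑ h, |∑ i, dg i k * (v i h - w i h)|) 0) ∧
    -- (c) consequently, the bi-level adversarial problem and the explicit convex program
    -- have the same optimal value:
    sInf {c : ℝ | ∃ v' w' : Fin Ph → Fin dd → ℝ,
        (∀ i, ∀ k, ε * ∑ h, |v' i h| ≤
          (((2 : ℝ) • Matrix.diagonal (dg i) - 1) *ᵥ (X *ᵥ v' i)) k) ∧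
        (∀ i, ∀ k, ε * ∑ h, |w' i h| ≤
          (((2 : ℝ) • Matrix.diagonal (dg i) - 1) *ᵥ (X *ᵥ w' i)) k) ∧
        c = sSup {t : ℝ | ∃ Δ : Matrix (Fin n) (Fin dd) ℝ, (∀ k h, |Δ k h| ≤ ε) ∧
            t = (1 / (n : ℝ)) * ∑ k, max
              (1 - y k * ∑ i, dg i k * ∑ h, (X k h + Δ k h) * (v' i h - w' i h)) 0} +
          β * ∑ i, (Real.sqrt (∑ h, (v' i h) ^ 2) + Real.sqrt (∑ h, (w' i h) ^ 2))}
      = sInf {c : ℝ | ∃ v' w' : Fin Ph → Fin dd → ℝ,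
        (∀ i, ∀ k, ε * ∑ h, |v' i h| ≤
          (((2 : ℝ) • Matrix.diagonal (dg i) - 1) *ᵥ (X *ᵥ v' i)) k) ∧
        (∀ i, ∀ k, ε * ∑ h, |w' i h| ≤
          (((2 : ℝ) • Matrix.diagonal (dg i) - 1) *ᵥ (X *ᵥ w' i)) k) ∧
        c = (1 / (n : ℝ)) * ∑ k, max
            (1 - y k * (∑ i, dg i k * ∑ h, X k h * (v' i h - w' i h)) +
              ε * ∑ h, |∑ i, dg i k * (v' i h - w' i h)|) 0 +
          β * ∑ i, (Real.sqrt (∑ h, (v' i h) ^ 2) + Real.sqrt (∑ h, (w' i h) ^ 2))} := by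
  have hy' : ∀ k, |y k| = 1 := fun k => by rcases hy k with h | h <;> simp [h]
  have hsup : ∀ v' w' : Fin Ph → Fin dd → ℝ, sSup {t | ∃ Δ : Matrix (Fin n) (Fin dd) ℝ,
      (∀ k h, |Δ k h| ≤ ε) ∧ t = adversarialHingeLoss X y dg v' w' Δ}
        = robustHingeLoss X y ε dg v' w' :=
    fun v' w' => (isGreatest_adversarialHingeLoss hy' hε).csSup_eq
  refine ⟨isGreatest_adversarialHingeLoss hy' hε,
    ⟨abs_worstPerturbation_le hε, adversarialHingeLoss_worstPerturbation hy'⟩, ?_⟩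
  simp only [adversarialHingeLoss, robustHingeLoss] at hsup
  simp only [hsup]

/-- closed form of the inner maximization of the hinge-loss adversarial
objective over row-wise ℓ∞-bounded perturbations, its maximizer
`Δ* = −ε·sgn(∑ᵢ Dᵢ y (vᵢ−wᵢ)ᵀ)`, and the resulting equality of optimal values between the
bi-level problem and the explicit convex program. -/
theorem statement_11 {n dd Ph : ℕ}
    (X : Matrix (Fin n) (Fin dd) ℝ) (y : Fin n → ℝ) (hy : ∀ k, y k = 1 ∨ y k = -1)
    (ε : ℝ) (hε : 0 ≤ ε) (β : ℝ) (hβ : 0 < β)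
    (dg : Fin Ph → Fin n → ℝ) (hdg : ∀ i k, dg i k = 0 ∨ dg i k = 1)
    (v w : Fin Ph → Fin dd → ℝ) :
    -- (a) the inner supremum has the explicit closed form:
    IsGreatest {t : ℝ | ∃ Δ : Matrix (Fin n) (Fin dd) ℝ, (∀ k h, |Δ k h| ≤ ε) ∧
        t = (1 / (n : ℝ)) * ∑ k, max
          (1 - y k * ∑ i, dg i k * ∑ h, (X k h + Δ k h) * (v i h - w i h)) 0}
      ((1 / (n : ℝ)) * ∑ k, max
        (1 - y k * (∑ i, dg i k * ∑ h, X k h * (v i h - w i h)) +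
          ε * ∑ h, |∑ i, dg i k * (v i h - w i h)|) 0) ∧
    -- (b) it is attained at Δ* = −ε·sgn(∑ᵢ Dᵢ y (vᵢ − wᵢ)ᵀ):
    ((∀ k h, |(fun k' h' => -ε * Real.sign (∑ i, dg i k' * (y k' * (v i h' - w i h'))) :
        Matrix (Fin n) (Fin dd) ℝ) k h| ≤ ε) ∧
      (1 / (n : ℝ)) * ∑ k, max
        (1 - y k * ∑ i, dg i k * ∑ h, (X k h +
          (-ε * Real.sign (∑ i', dg i' k * (y k * (v i' h - w i' h))))) * (v i h - w i h)) 0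
      = (1 / (n : ℝ)) * ∑ k, max
        (1 - y k * (∑ i, dg i k * ∑ h, X k h * (v i h - w i h)) +
          ε * ∑ h, |∑ i, dg i k * (v i h - w i h)|) 0) ∧
    -- (c) consequently, the bi-level adversarial problem and the explicit convex program
    -- have the same optimal value:
    sInf {c : ℝ | ∃ v' w' : Fin Ph → Fin dd → ℝ,
        (∀ i, ∀ k, ε * ∑ h, |v' i h| ≤
          (((2 : ℝ) • Matrix.diagonal (dg i) - 1) *ᵥ (X *ᵥ v' i)) k) ∧
        (∀ i, ∀ k, ε * ∑ h, |w' i h| ≤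
          (((2 : ℝ) • Matrix.diagonal (dg i) - 1) *ᵥ (X *ᵥ w' i)) k) ∧
        c = sSup {t : ℝ | ∃ Δ : Matrix (Fin n) (Fin dd) ℝ, (∀ k h, |Δ k h| ≤ ε) ∧
            t = (1 / (n : ℝ)) * ∑ k, max
              (1 - y k * ∑ i, dg i k * ∑ h, (X k h + Δ k h) * (v' i h - w' i h)) 0} +
          β * ∑ i, (Real.sqrt (∑ h, (v' i h) ^ 2) + Real.sqrt (∑ h, (w' i h) ^ 2))}
      = sInf {c : ℝ | ∃ v' w' : Fin Ph → Fin dd → ℝ,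
        (∀ i, ∀ k, ε * ∑ h, |v' i h| ≤
          (((2 : ℝ) • Matrix.diagonal (dg i) - 1) *ᵥ (X *ᵥ v' i)) k) ∧
        (∀ i, ∀ k, ε * ∑ h, |w' i h| ≤
          (((2 : ℝ) • Matrix.diagonal (dg i) - 1) *ᵥ (X *ᵥ w' i)) k) ∧
        c = (1 / (n : ℝ)) * ∑ k, max
            (1 - y k * (∑ i, dg i k * ∑ h, X k h * (v' i h - w' i h)) +
              ε * ∑ h, |∑ i, dg i k * (v' i h - w' i h)|) 0 +
          β * ∑ i, (Real.sqrt (∑ h, (v' i h) ^ 2) + Real.sqrt (∑ h, (w' i h) ^ 2))} :=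
  statement_11_general X y hy ε hε β dg v w
end
end

section
/- Let X ∈ ℝ^{n×d} with rows x_1ᵀ, …, x_nᵀ, y ∈ ℝⁿ, β > 0, ε ≥ 0, and let D_1, …, D_{P̂} be diagonal matrices with 0/1 diagonal entries (d_{ik} the k-th diagonal entry of D_i). Then the minimax problem inf over (v_i, w_i)_{i=1}^{P̂} of [ sup over Δ ∈ ℝ^{n×d} with rows ‖δ_k‖∞ ≤ ε of (1/2) ‖∑_{i=1}^{P̂} D_i (X + Δ)(v_i − w_i) − y‖₂² ] + β ∑_{i=1}^{P̂} (‖v_i‖₂ + ‖w_i‖₂), subject to (2D_i − I_n) X v_i ≥ ε ‖v_i‖₁ and (2D_i − I_n) X w_i ≥ ε ‖w_i‖₁ for all i ∈ [P̂], has the same optimal value as the second-order cone program: inf over (v_i, w_i, b_i, c_i)_{i=1}^{P̂}, a ∈ ℝ, z ∈ ℝ^{n+1} of a + β ∑_{i=1}^{P̂} (b_i + c_i), subject to (2D_i − I_n) X v_i ≥ ε ‖v_i‖₁, (2D_i − I_n) X w_i ≥ ε ‖w_i‖₁, ‖v_i‖₂ ≤ b_i, ‖w_i‖₂ ≤ c_i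 for all i ∈ [P̂]; z_k ≥ |∑_{i=1}^{P̂} d_{ik} x_kᵀ (v_i − w_i) − y_k| + ε ‖∑_{i=1}^{P̂} d_{ik} (v_i − w_i)‖₁ for all k ∈ [n]; z_{n+1} ≥ |2a − 1/4|; and ‖z‖₂ ≤ 2a + 1/4. -/
open Matrix

noncomputable section

private lemma sg_mul' (x : ℝ) : (if 0 ≤ x then (1:ℝ) else -1) * x = |x| := by
  split
  · rw [one_mul, abs_of_nonneg ‹_›]
  · rw [neg_one_mul, abs_of_neg (lt_of_not_ge ‹_›)]

private lemma abs_sg' (x : ℝ) : |(if 0 ≤ x then (1:ℝ) else -1)| = 1 := by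
  split <;> simp

private lemma isGreatest_adv' {n dd : ℕ} (ε : ℝ) (hε : 0 ≤ ε) (r : Fin n → ℝ)
    (g : Fin n → Fin dd → ℝ) :
    IsGreatest {t : ℝ | ∃ Δ : Matrix (Fin n) (Fin dd) ℝ, (∀ k h, |Δ k h| ≤ ε) ∧
      t = (1/2) * ∑ k, (r k + ∑ h, Δ k h * g k h) ^ 2}
      ((1/2) * ∑ k, (|r k| + ε * ∑ h, |g k h|) ^ 2) := by
  constructor
  · refine ⟨fun k h => ε * (if 0 ≤ r k then (1:ℝ) else -1) * (if 0 ≤ g k h then (1:ℝ) else -1),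
      fun k h => ?_, ?_⟩
    · rw [abs_mul, abs_mul, abs_sg', abs_sg', abs_of_nonneg hε]; simp
    · congr 1
      refine Finset.sum_congr rfl fun k _ => ?_
      have hsum : ∑ h, (ε * (if 0 ≤ r k then (1:ℝ) else -1) *
            (if 0 ≤ g k h then (1:ℝ) else -1)) * g k h
          = ε * (if 0 ≤ r k then (1:ℝ) else -1) * ∑ h, |g k h| := by
        rw [Finset.mul_sum]
        exact Finset.sum_congr rfl fun h _ => by rw [mul_assoc, sg_mul']
      rw [hsum]
      have hG : 0 ≤ ∑ h, |g k h| := Finset.sum_nonneg fun _ _ => abs_nonneg _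
      by_cases h0 : 0 ≤ r k
      · rw [if_pos h0, abs_of_nonneg h0]; ring
      · rw [if_neg h0, abs_of_neg (lt_of_not_ge h0)]; ring
  · rintro t ⟨Δ, hΔ, rfl⟩
    have h2 : (0:ℝ) ≤ 1/2 := by norm_num
    refine mul_le_mul_of_nonneg_left (Finset.sum_le_sum fun k _ => ?_) h2
    have hS : |∑ h, Δ k h * g k h| ≤ ε * ∑ h, |g k h| := by
      refine (Finset.abs_sum_le_sum_abs _ _).trans ?_
      rw [Finset.mul_sum]
      exact Finset.sum_le_sum fun h _ => by
        rw [abs_mul]; exact mul_le_mul_of_nonneg_right (hΔ k h) (abs_nonneg _)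
    have habs : |r k + ∑ h, Δ k h * g k h| ≤ |r k| + ε * ∑ h, |g k h| :=
      (abs_add_le _ _).trans (by linarith)
    calc (r k + ∑ h, Δ k h * g k h) ^ 2
        = |r k + ∑ h, Δ k h * g k h| ^ 2 := (sq_abs _).symm
      _ ≤ (|r k| + ε * ∑ h, |g k h|) ^ 2 := pow_le_pow_left₀ (abs_nonneg _) habs 2

private lemma term_eq' {n dd Ph : ℕ} (X : Matrix (Fin n) (Fin dd) ℝ) (y : Fin n → ℝ)
    (dg : Fin Ph → Fin n → ℝ) (v w : Fin Ph → Fin dd → ℝ)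
    (Δ : Matrix (Fin n) (Fin dd) ℝ) (k : Fin n) :
    (∑ i, Matrix.diagonal (dg i) *ᵥ ((X + Δ) *ᵥ (v i - w i))) k - y k
      = (∑ i, dg i k * (∑ h, X k h * (v i h - w i h)) - y k)
        + ∑ h, Δ k h * (∑ i, dg i k * (v i h - w i h)) := by
  have swap : ∑ i, dg i k * ∑ h, Δ k h * (v i h - w i h)
      = ∑ h, Δ k h * ∑ i, dg i k * (v i h - w i h) := by
    simp_rw [Finset.mul_sum]
    rw [Finset.sum_comm]
    exact Finset.sum_congr rfl fun h _ => Finset.sum_congr rfl fun i _ => by ring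
  simp only [Finset.sum_apply, Matrix.add_mulVec, Pi.add_apply, Matrix.mulVec_diagonal]
  simp only [Matrix.mulVec, dotProduct, Pi.sub_apply, mul_add, Finset.sum_add_distrib]
  rw [swap]; ring

private lemma z_bound' {n : ℕ} (a : ℝ) (z : Fin (n+1) → ℝ)
    (hlast : |2*a - 1/4| ≤ z (Fin.last n))
    (hnorm : Real.sqrt (∑ j, z j ^ 2) ≤ 2*a + 1/4) :
    ∑ k : Fin n, (z k.castSucc) ^ 2 ≤ 2*a := by
  have h0 : (0:ℝ) ≤ ∑ j, z j ^ 2 := Finset.sum_nonneg fun _ _ => sq_nonneg _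
  have h1 : ∑ j, z j ^ 2 ≤ (2*a+1/4)^2 := by
    have hs := Real.sq_sqrt h0
    nlinarith [Real.sqrt_nonneg (∑ j, z j ^ 2)]
  have h2 : (2*a-1/4)^2 ≤ z (Fin.last n) ^ 2 := by
    rw [← sq_abs (2*a-1/4)]
    exact pow_le_pow_left₀ (abs_nonneg _) hlast 2
  have h3 : ∑ j, z j ^ 2 = ∑ k : Fin n, z k.castSucc ^ 2 + z (Fin.last n) ^ 2 :=
    Fin.sum_univ_castSucc _
  nlinarith

private lemma socp_z' {m : ℕ} (u : Fin m → ℝ) :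
    ∃ z : Fin (m+1) → ℝ, (∀ k, u k ≤ z k.castSucc) ∧
      |2 * ((1/2) * ∑ k, u k ^ 2) - 1/4| ≤ z (Fin.last m) ∧
      Real.sqrt (∑ j, z j ^ 2) ≤ 2 * ((1/2) * ∑ k, u k ^ 2) + 1/4 := by
  set a : ℝ := (1/2) * ∑ k, u k ^ 2 with hadef
  have ha : 0 ≤ ∑ k, u k ^ 2 := Finset.sum_nonneg fun _ _ => sq_nonneg _
  refine ⟨Fin.lastCases (|2*a - 1/4|) u, fun k => ?_, ?_, ?_⟩
  · simp only []
    rw [Fin.lastCases_castSucc]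
  · simp only []
    rw [Fin.lastCases_last]
  · have hsum : ∑ j, (Fin.lastCases (|2*a - 1/4|) u : Fin (m+1) → ℝ) j ^ 2
        = ∑ k, u k ^ 2 + |2*a - 1/4| ^ 2 := by
      rw [Fin.sum_univ_castSucc]
      simp [Fin.lastCases_castSucc, Fin.lastCases_last]
    rw [hsum, sq_abs]
    have heq : ∑ k, u k ^ 2 + (2*a - 1/4)^2 = (2*a + 1/4)^2 := by
      rw [hadef]; ring
    rw [heq, Real.sqrt_sq (by rw [hadef]; linarith)]

/-- the squared-loss adversarial minimax problem has the same optimal value as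
the second-order cone program (SOCP) reformulation. -/
theorem statement_12 {n dd Ph : ℕ}
    (X : Matrix (Fin n) (Fin dd) ℝ) (y : Fin n → ℝ)
    (β : ℝ) (hβ : 0 < β) (ε : ℝ) (hε : 0 ≤ ε)
    (dg : Fin Ph → Fin n → ℝ) (hdg : ∀ i k, dg i k = 0 ∨ dg i k = 1) :
    sInf {c : ℝ | ∃ v w : Fin Ph → Fin dd → ℝ,
        (∀ i, ∀ k, ε * ∑ h, |v i h| ≤
          (((2 : ℝ) • Matrix.diagonal (dg i) - 1) *ᵥ (X *ᵥ v i)) k) ∧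
        (∀ i, ∀ k, ε * ∑ h, |w i h| ≤
          (((2 : ℝ) • Matrix.diagonal (dg i) - 1) *ᵥ (X *ᵥ w i)) k) ∧
        c = sSup {t : ℝ | ∃ Δ : Matrix (Fin n) (Fin dd) ℝ, (∀ k h, |Δ k h| ≤ ε) ∧
            t = (1 / 2) * ∑ k,
              ((∑ i, Matrix.diagonal (dg i) *ᵥ ((X + Δ) *ᵥ (v i - w i))) k - y k) ^ 2} +
          β * ∑ i, (Real.sqrt (∑ h, (v i h) ^ 2) + Real.sqrt (∑ h, (w i h) ^ 2))}
      = sInf {c : ℝ | ∃ (v w : Fin Ph → Fin dd → ℝ) (b bc : Fin Ph → ℝ)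
          (a : ℝ) (z : Fin (n + 1) → ℝ),
        (∀ i, ∀ k, ε * ∑ h, |v i h| ≤
          (((2 : ℝ) • Matrix.diagonal (dg i) - 1) *ᵥ (X *ᵥ v i)) k) ∧
        (∀ i, ∀ k, ε * ∑ h, |w i h| ≤
          (((2 : ℝ) • Matrix.diagonal (dg i) - 1) *ᵥ (X *ᵥ w i)) k) ∧
        (∀ i, Real.sqrt (∑ h, (v i h) ^ 2) ≤ b i) ∧
        (∀ i, Real.sqrt (∑ h, (w i h) ^ 2) ≤ bc i) ∧
        (∀ k : Fin n, |∑ i, dg i k * (∑ h, X k h * (v i h - w i h)) - y k| +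
          ε * ∑ h, |∑ i, dg i k * (v i h - w i h)| ≤ z k.castSucc) ∧
        |2 * a - 1 / 4| ≤ z (Fin.last n) ∧
        Real.sqrt (∑ j, (z j) ^ 2) ≤ 2 * a + 1 / 4 ∧
        c = a + β * ∑ i, (b i + bc i)} := by
  classical
  have hsup : ∀ v w : Fin Ph → Fin dd → ℝ,
      sSup {t : ℝ | ∃ Δ : Matrix (Fin n) (Fin dd) ℝ, (∀ k h, |Δ k h| ≤ ε) ∧
          t = (1 / 2) * ∑ k,
            ((∑ i, Matrix.diagonal (dg i) *ᵥ ((X + Δ) *ᵥ (v i - w i))) k - y k) ^ 2}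
        = (1/2) * ∑ k, (|∑ i, dg i k * (∑ h, X k h * (v i h - w i h)) - y k|
            + ε * ∑ h, |∑ i, dg i k * (v i h - w i h)|) ^ 2 := by
    intro v w
    have hset : {t : ℝ | ∃ Δ : Matrix (Fin n) (Fin dd) ℝ, (∀ k h, |Δ k h| ≤ ε) ∧
          t = (1 / 2) * ∑ k,
            ((∑ i, Matrix.diagonal (dg i) *ᵥ ((X + Δ) *ᵥ (v i - w i))) k - y k) ^ 2}
        = {t : ℝ | ∃ Δ : Matrix (Fin n) (Fin dd) ℝ, (∀ k h, |Δ k h| ≤ ε) ∧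
          t = (1/2) * ∑ k, ((∑ i, dg i k * (∑ h, X k h * (v i h - w i h)) - y k)
            + ∑ h, Δ k h * (∑ i, dg i k * (v i h - w i h))) ^ 2} := by
      ext t
      simp only [Set.mem_setOf_eq]
      refine exists_congr fun Δ => and_congr_right fun _ => ?_
      rw [Finset.sum_congr rfl fun k _ => by rw [term_eq' X y dg v w Δ k]]
    rw [hset]
    exact (isGreatest_adv' ε hε
      (fun k => ∑ i, dg i k * (∑ h, X k h * (v i h - w i h)) - y k)
      (fun k h => ∑ i, dg i k * (v i h - w i h))).csSup_eq
  have hU0 : ∀ v w : Fin Ph → Fin dd → ℝ, ∀ k : Fin n,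
      (0:ℝ) ≤ |∑ i, dg i k * (∑ h, X k h * (v i h - w i h)) - y k|
        + ε * ∑ h, |∑ i, dg i k * (v i h - w i h)| := fun v w k => by
    have h3 : (0:ℝ) ≤ ∑ h, |∑ i, dg i k * (v i h - w i h)| :=
      Finset.sum_nonneg fun _ _ => abs_nonneg _
    have h4 := abs_nonneg (∑ i, dg i k * (∑ h, X k h * (v i h - w i h)) - y k)
    nlinarith
  set L := {c : ℝ | ∃ v w : Fin Ph → Fin dd → ℝ,
        (∀ i, ∀ k, ε * ∑ h, |v i h| ≤
          (((2 : ℝ) • Matrix.diagonal (dg i) - 1) *ᵥ (X *ᵥ v i)) k) ∧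
        (∀ i, ∀ k, ε * ∑ h, |w i h| ≤
          (((2 : ℝ) • Matrix.diagonal (dg i) - 1) *ᵥ (X *ᵥ w i)) k) ∧
        c = sSup {t : ℝ | ∃ Δ : Matrix (Fin n) (Fin dd) ℝ, (∀ k h, |Δ k h| ≤ ε) ∧
            t = (1 / 2) * ∑ k,
              ((∑ i, Matrix.diagonal (dg i) *ᵥ ((X + Δ) *ᵥ (v i - w i))) k - y k) ^ 2} +
          β * ∑ i, (Real.sqrt (∑ h, (v i h) ^ 2) + Real.sqrt (∑ h, (w i h) ^ 2))} with hLdef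
  set R := {c : ℝ | ∃ (v w : Fin Ph → Fin dd → ℝ) (b bc : Fin Ph → ℝ)
          (a : ℝ) (z : Fin (n + 1) → ℝ),
        (∀ i, ∀ k, ε * ∑ h, |v i h| ≤
          (((2 : ℝ) • Matrix.diagonal (dg i) - 1) *ᵥ (X *ᵥ v i)) k) ∧
        (∀ i, ∀ k, ε * ∑ h, |w i h| ≤
          (((2 : ℝ) • Matrix.diagonal (dg i) - 1) *ᵥ (X *ᵥ w i)) k) ∧
        (∀ i, Real.sqrt (∑ h, (v i h) ^ 2) ≤ b i) ∧
        (∀ i, Real.sqrt (∑ h, (w i h) ^ 2) ≤ bc i) ∧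
        (∀ k : Fin n, |∑ i, dg i k * (∑ h, X k h * (v i h - w i h)) - y k| +
          ε * ∑ h, |∑ i, dg i k * (v i h - w i h)| ≤ z k.castSucc) ∧
        |2 * a - 1 / 4| ≤ z (Fin.last n) ∧
        Real.sqrt (∑ j, (z j) ^ 2) ≤ 2 * a + 1 / 4 ∧
        c = a + β * ∑ i, (b i + bc i)} with hRdef
  -- membership lemmas
  have hmemL : ∀ v w : Fin Ph → Fin dd → ℝ,
      (∀ i, ∀ k, ε * ∑ h, |v i h| ≤
        (((2 : ℝ) • Matrix.diagonal (dg i) - 1) *ᵥ (X *ᵥ v i)) k) →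
      (∀ i, ∀ k, ε * ∑ h, |w i h| ≤
        (((2 : ℝ) • Matrix.diagonal (dg i) - 1) *ᵥ (X *ᵥ w i)) k) →
      ((1/2) * ∑ k, (|∑ i, dg i k * (∑ h, X k h * (v i h - w i h)) - y k|
          + ε * ∑ h, |∑ i, dg i k * (v i h - w i h)|) ^ 2
        + β * ∑ i, (Real.sqrt (∑ h, (v i h) ^ 2) + Real.sqrt (∑ h, (w i h) ^ 2))) ∈ L := by
    intro v w h1 h2
    rw [hLdef]
    exact ⟨v, w, h1, h2, by rw [hsup v w]⟩
  have hmemR : ∀ v w : Fin Ph → Fin dd → ℝ,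
      (∀ i, ∀ k, ε * ∑ h, |v i h| ≤
        (((2 : ℝ) • Matrix.diagonal (dg i) - 1) *ᵥ (X *ᵥ v i)) k) →
      (∀ i, ∀ k, ε * ∑ h, |w i h| ≤
        (((2 : ℝ) • Matrix.diagonal (dg i) - 1) *ᵥ (X *ᵥ w i)) k) →
      ((1/2) * ∑ k, (|∑ i, dg i k * (∑ h, X k h * (v i h - w i h)) - y k|
          + ε * ∑ h, |∑ i, dg i k * (v i h - w i h)|) ^ 2
        + β * ∑ i, (Real.sqrt (∑ h, (v i h) ^ 2) + Real.sqrt (∑ h, (w i h) ^ 2))) ∈ R := by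
    intro v w h1 h2
    obtain ⟨z, hz, hlast, hnorm⟩ := socp_z'
      (fun k => |∑ i, dg i k * (∑ h, X k h * (v i h - w i h)) - y k|
        + ε * ∑ h, |∑ i, dg i k * (v i h - w i h)|)
    rw [hRdef]
    exact ⟨v, w, fun i => Real.sqrt (∑ h, (v i h) ^ 2), fun i => Real.sqrt (∑ h, (w i h) ^ 2),
      (1/2) * ∑ k, (|∑ i, dg i k * (∑ h, X k h * (v i h - w i h)) - y k|
        + ε * ∑ h, |∑ i, dg i k * (v i h - w i h)|) ^ 2, z,
      h1, h2, fun i => le_refl _, fun i => le_refl _, hz, hlast, hnorm, rfl⟩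
  have hfeas0 : ∀ i : Fin Ph, ∀ k : Fin n,
      ε * ∑ h, |(0 : Fin Ph → Fin dd → ℝ) i h| ≤
        (((2 : ℝ) • Matrix.diagonal (dg i) - 1) *ᵥ (X *ᵥ (0 : Fin Ph → Fin dd → ℝ) i)) k := by
    intro i k; simp
  -- bounded below
  have hLbdd : BddBelow L := by
    refine ⟨0, ?_⟩
    rintro c ⟨v, w, -, -, rfl⟩
    rw [hsup v w]
    have hA : (0:ℝ) ≤ ∑ k, (|∑ i, dg i k * (∑ h, X k h * (v i h - w i h)) - y k|
        + ε * ∑ h, |∑ i, dg i k * (v i h - w i h)|) ^ 2 :=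
      Finset.sum_nonneg fun _ _ => sq_nonneg _
    have hS : (0:ℝ) ≤ ∑ i, (Real.sqrt (∑ h, (v i h) ^ 2) + Real.sqrt (∑ h, (w i h) ^ 2)) :=
      Finset.sum_nonneg fun i _ => add_nonneg (Real.sqrt_nonneg _) (Real.sqrt_nonneg _)
    nlinarith
  have hRbdd : BddBelow R := by
    refine ⟨0, ?_⟩
    rintro c ⟨v, w, b, bc, a, z, -, -, hb, hbc, -, hlast, hnorm, rfl⟩
    have hzb := z_bound' a z hlast hnorm
    have hzs : (0:ℝ) ≤ ∑ k : Fin n, (z k.castSucc) ^ 2 :=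
      Finset.sum_nonneg fun _ _ => sq_nonneg _
    have hS : (0:ℝ) ≤ ∑ i, (b i + bc i) :=
      Finset.sum_nonneg fun i _ =>
        add_nonneg ((Real.sqrt_nonneg _).trans (hb i)) ((Real.sqrt_nonneg _).trans (hbc i))
    nlinarith
  apply le_antisymm
  · refine le_csInf ⟨_, hmemR 0 0 hfeas0 hfeas0⟩ ?_
    rintro c ⟨v, w, b, bc, a, z, h1, h2, hb, hbc, hz, hlast, hnorm, rfl⟩
    refine (csInf_le hLbdd (hmemL v w h1 h2)).trans ?_
    have hA : (1/2) * ∑ k, (|∑ i, dg i k * (∑ h, X k h * (v i h - w i h)) - y k|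
        + ε * ∑ h, |∑ i, dg i k * (v i h - w i h)|) ^ 2 ≤ a := by
      have hzb := z_bound' a z hlast hnorm
      have hsum : ∑ k, (|∑ i, dg i k * (∑ h, X k h * (v i h - w i h)) - y k|
          + ε * ∑ h, |∑ i, dg i k * (v i h - w i h)|) ^ 2
          ≤ ∑ k : Fin n, (z k.castSucc) ^ 2 :=
        Finset.sum_le_sum fun k _ => pow_le_pow_left₀ (hU0 v w k) (hz k) 2
      linarith
    have hB : ∑ i, (Real.sqrt (∑ h, (v i h) ^ 2) + Real.sqrt (∑ h, (w i h) ^ 2))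
        ≤ ∑ i, (b i + bc i) :=
      Finset.sum_le_sum fun i _ => add_le_add (hb i) (hbc i)
    nlinarith
  · refine le_csInf ⟨_, hmemL 0 0 hfeas0 hfeas0⟩ ?_
    rintro c ⟨v, w, h1, h2, rfl⟩
    rw [hsup v w]
    exact csInf_le hRbdd (hmemR v w h1 h2)
end
end

section
/- Let X ∈ ℝ^{n×d} with rows x_1ᵀ, …, x_nᵀ, y ∈ ℝⁿ, ε ≥ 0, let D_1, …, D_{P̂} be diagonal matrices with 0/1 diagonal entries (d_{ik} the k-th diagonal entry of D_i), and fix (v_i, w_i)_{i=1}^{P̂} ⊆ ℝ^d × ℝ^d and a ∈ ℝ. Then the robust constraint sup over Δ ∈ ℝ^{n×d} with rows ‖δ_k‖∞ ≤ ε of ‖( ∑_{i=1}^{P̂} D_i (X + Δ)(v_i − w_i) − y , 2a − 1/4 )‖₂ ≤ 2a + 1/4 (where the argument is the (n+1)-vector stacking the n entries of ∑_i D_i (X+Δ)(v_i − w_i) − y and the scalar 2a − 1/4) holds if and only if there exists z ∈ ℝ^{n+1} with z_k ≥ |∑_{i=1}^{P̂} d_{ik} x_kᵀ (v_i − w_i)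 − y_k| + ε ‖∑_{i=1}^{P̂} d_{ik} (v_i − w_i)‖₁ for all k ∈ [n], z_{n+1} ≥ |2a − 1/4|, and ‖z‖₂ ≤ 2a + 1/4. -/
open Matrix

noncomputable section

private def sg (x : ℝ) : ℝ := if x < 0 then -1 else 1

private lemma sg_mul_self (x : ℝ) : sg x * x = |x| := by
  unfold sg
  split_ifs with h
  · rw [abs_of_neg h]; ring
  · rw [abs_of_nonneg (le_of_not_gt h)]; ring

private lemma abs_sg (x : ℝ) : |sg x| = 1 := by
  unfold sg; split_ifs <;> simp

private lemma expand_lemma {n dd Ph : ℕ} (X Δ : Matrix (Fin n) (Fin dd) ℝ) (y : Fin n → ℝ)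
    (dg : Fin Ph → Fin n → ℝ) (v w : Fin Ph → Fin dd → ℝ) (k : Fin n) :
    (∑ i, Matrix.diagonal (dg i) *ᵥ ((X + Δ) *ᵥ (v i - w i))) k - y k
      = (∑ i, dg i k * (∑ h, X k h * (v i h - w i h)) - y k)
        + ∑ h, Δ k h * ∑ i, dg i k * (v i h - w i h) := by
  simp only [Finset.sum_apply, Matrix.mulVec_diagonal]
  simp only [Matrix.mulVec, dotProduct, Matrix.add_apply, Pi.sub_apply,
    Finset.mul_sum, add_mul, mul_add, Finset.sum_add_distrib]
  rw [Finset.sum_comm (s := Finset.univ (α := Fin Ph)) (t := Finset.univ (α := Fin dd))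
    (f := fun x i => dg x k * (Δ k i * (v x i - w x i)))]
  have : ∀ x : Fin dd, ∑ i : Fin Ph, dg i k * (Δ k x * (v i x - w i x))
      = ∑ i : Fin Ph, Δ k x * (dg i k * (v i x - w i x)) := by
    intro x; exact Finset.sum_congr rfl fun i _ => by ring
  simp only [this]
  ring

/-- the robust second-order-cone constraint over all row-wise ℓ∞-bounded
perturbations holds iff there is a slack vector `z` satisfying the explicit constraints. -/
theorem statement_13 {n dd Ph : ℕ}
    (X : Matrix (Fin n) (Fin dd) ℝ) (y : Fin n → ℝ) (ε : ℝ) (hε : 0 ≤ ε)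
    (dg : Fin Ph → Fin n → ℝ) (hdg : ∀ i k, dg i k = 0 ∨ dg i k = 1)
    (v w : Fin Ph → Fin dd → ℝ) (a : ℝ) :
    sSup {t : ℝ | ∃ Δ : Matrix (Fin n) (Fin dd) ℝ, (∀ k h, |Δ k h| ≤ ε) ∧
        t = Real.sqrt ((∑ k,
            ((∑ i, Matrix.diagonal (dg i) *ᵥ ((X + Δ) *ᵥ (v i - w i))) k - y k) ^ 2) +
          (2 * a - 1 / 4) ^ 2)} ≤ 2 * a + 1 / 4
    ↔ ∃ z : Fin (n + 1) → ℝ,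
        (∀ k : Fin n, |∑ i, dg i k * (∑ h, X k h * (v i h - w i h)) - y k| +
          ε * ∑ h, |∑ i, dg i k * (v i h - w i h)| ≤ z k.castSucc) ∧
        |2 * a - 1 / 4| ≤ z (Fin.last n) ∧
        Real.sqrt (∑ j, (z j) ^ 2) ≤ 2 * a + 1 / 4 := by
  set b : ℝ := 2 * a - 1 / 4 with hb
  set c : Fin n → ℝ := fun k => ∑ i, dg i k * (∑ h, X k h * (v i h - w i h)) - y k with hc
  set s : Fin n → Fin dd → ℝ := fun k h => ∑ i, dg i k * (v i h - w i h) with hs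
  set M : Fin n → ℝ := fun k => |c k| + ε * ∑ h, |s k h| with hM
  -- bound on each coordinate
  have keybound : ∀ (Δ : Matrix (Fin n) (Fin dd) ℝ), (∀ k h, |Δ k h| ≤ ε) →
      ∀ k, |c k + ∑ h, Δ k h * s k h| ≤ M k := by
    intro Δ hΔ k
    calc |c k + ∑ h, Δ k h * s k h| ≤ |c k| + |∑ h, Δ k h * s k h| := abs_add_le _ _
      _ ≤ |c k| + ∑ h, |Δ k h * s k h| := by
          gcongr; exact Finset.abs_sum_le_sum_abs _ _
      _ ≤ |c k| + ∑ h, ε * |s k h| := by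
          gcongr with h
          rw [abs_mul]
          exact mul_le_mul_of_nonneg_right (hΔ k h) (abs_nonneg _)
      _ = M k := by rw [hM]; simp [Finset.mul_sum]
  -- the maximizing perturbation
  set Δs : Matrix (Fin n) (Fin dd) ℝ := fun k h => ε * sg (c k) * sg (s k h) with hΔs
  have hΔsle : ∀ k h, |Δs k h| ≤ ε := by
    intro k h
    show |ε * sg (c k) * sg (s k h)| ≤ ε
    rw [abs_mul, abs_mul, abs_sg, abs_sg, abs_of_nonneg hε]
    ring_nf
    exact le_rfl
  have hΔseq : ∀ k, (c k + ∑ h, Δs k h * s k h) ^ 2 = (M k) ^ 2 := by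
    intro k
    have h1 : ∑ h, Δs k h * s k h = sg (c k) * (ε * ∑ h, |s k h|) := by
      rw [Finset.mul_sum, Finset.mul_sum]
      refine Finset.sum_congr rfl fun h _ => ?_
      show ε * sg (c k) * sg (s k h) * s k h = sg (c k) * (ε * |s k h|)
      linear_combination (ε * sg (c k)) * sg_mul_self (s k h)
    rw [h1]
    show (c k + sg (c k) * (ε * ∑ h, |s k h|)) ^ 2
        = (|c k| + ε * ∑ h, |s k h|) ^ 2
    unfold sg
    split_ifs with h
    · rw [abs_of_neg h]; ring
    · rw [abs_of_nonneg (le_of_not_gt h)]; ring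
  set S : Set ℝ := {t : ℝ | ∃ Δ : Matrix (Fin n) (Fin dd) ℝ, (∀ k h, |Δ k h| ≤ ε) ∧
        t = Real.sqrt ((∑ k,
            ((∑ i, Matrix.diagonal (dg i) *ᵥ ((X + Δ) *ᵥ (v i - w i))) k - y k) ^ 2) +
          b ^ 2)} with hS
  have hmem : ∀ t ∈ S, ∃ Δ : Matrix (Fin n) (Fin dd) ℝ, (∀ k h, |Δ k h| ≤ ε) ∧
      t = Real.sqrt ((∑ k, (c k + ∑ h, Δ k h * s k h) ^ 2) + b ^ 2) := by
    intro t ht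
    obtain ⟨Δ, hΔ, rfl⟩ := ht
    refine ⟨Δ, hΔ, ?_⟩
    congr 1
    refine congrArg (· + b ^ 2) (Finset.sum_congr rfl fun k _ => ?_)
    rw [expand_lemma X Δ y dg v w k]
  have htop : Real.sqrt ((∑ k, (M k) ^ 2) + b ^ 2) ∈ S := by
    refine ⟨Δs, hΔsle, ?_⟩
    congr 1
    refine congrArg (· + b ^ 2) (Finset.sum_congr rfl fun k _ => ?_).symm
    rw [expand_lemma X Δs y dg v w k, hΔseq k]
  have hbdd : ∀ t ∈ S, t ≤ Real.sqrt ((∑ k, (M k) ^ 2) + b ^ 2) := by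
    intro t ht
    obtain ⟨Δ, hΔ, rfl⟩ := hmem t ht
    apply Real.sqrt_le_sqrt
    refine add_le_add (Finset.sum_le_sum fun k _ => ?_) le_rfl
    have h1 := pow_le_pow_left₀ (abs_nonneg _) (keybound Δ hΔ k) 2
    rwa [sq_abs] at h1
  have hne : S.Nonempty := ⟨_, htop⟩
  have hBdd : BddAbove S := ⟨_, hbdd⟩
  constructor
  · intro hsup
    refine ⟨Fin.snoc M |b|, ?_, ?_, ?_⟩
    · intro k; rw [Fin.snoc_castSucc]
    · rw [Fin.snoc_last]
    · have h1 : Real.sqrt ((∑ k, (M k) ^ 2) + b ^ 2) ≤ 2 * a + 1 / 4 :=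
        le_trans (le_csSup hBdd htop) hsup
      have h2 : ∑ j, ((Fin.snoc M |b| : Fin (n+1) → ℝ) j) ^ 2 = (∑ k, (M k) ^ 2) + b ^ 2 := by
        rw [Fin.sum_univ_castSucc]
        simp [sq_abs]
      rw [h2]; exact h1
  · rintro ⟨z, hz1, hz2, hz3⟩
    apply csSup_le hne
    intro t ht
    obtain ⟨Δ, hΔ, rfl⟩ := hmem t ht
    refine le_trans ?_ hz3
    apply Real.sqrt_le_sqrt
    rw [Fin.sum_univ_castSucc]
    refine add_le_add (Finset.sum_le_sum fun k _ => ?_) ?_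
    · have h1 : |c k + ∑ h, Δ k h * s k h| ≤ z k.castSucc :=
        le_trans (keybound Δ hΔ k) (hz1 k)
      have h2 := pow_le_pow_left₀ (abs_nonneg _) h1 2
      rwa [sq_abs] at h2
    · have h2 := pow_le_pow_left₀ (abs_nonneg b) hz2 2
      rwa [sq_abs] at h2
end
end

section
/- Let x, w ∈ ℝ^d, y ∈ ℝ, and ε ≥ 0. Then sup over δ ∈ ℝ^d with ‖δ‖∞ ≤ ε of |(x + δ)ᵀ w − y| equals |xᵀ w − y| + ε ‖w‖₁. -/
noncomputable section

/-- the worst-case absolute residual over an ℓ∞ ball of radius ε equals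
`|xᵀw − y| + ε‖w‖₁`. -/
theorem statement_14 {d : ℕ} (x w : Fin d → ℝ) (y : ℝ) (ε : ℝ) (hε : 0 ≤ ε) :
    sSup {t : ℝ | ∃ δ : Fin d → ℝ, (∀ h, |δ h| ≤ ε) ∧
        t = |(∑ h, (x h + δ h) * w h) - y|}
      = |(∑ h, x h * w h) - y| + ε * ∑ h, |w h| := by
  set s : ℝ := (∑ h, x h * w h) - y with hs
  set c : ℝ := ε * ∑ h, |w h| with hc
  have hc0 : 0 ≤ c := by
    apply mul_nonneg hε
    exact Finset.sum_nonneg fun h _ => abs_nonneg _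
  have key : ∀ δ : Fin d → ℝ,
      (∑ h, (x h + δ h) * w h) - y = s + ∑ h, δ h * w h := by
    intro δ
    simp only [add_mul, Finset.sum_add_distrib, hs]
    ring
  apply le_antisymm
  · apply Real.sSup_le
    · rintro t ⟨δ, hδ, rfl⟩
      rw [key]
      calc |s + ∑ h, δ h * w h| ≤ |s| + |∑ h, δ h * w h| := abs_add_le _ _
        _ ≤ |s| + c := by
            gcongr
            calc |∑ h, δ h * w h| ≤ ∑ h, |δ h * w h| := Finset.abs_sum_le_sum_abs _ _
              _ ≤ ∑ h, ε * |w h| := by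
                  apply Finset.sum_le_sum
                  intro h _
                  rw [abs_mul]
                  exact mul_le_mul_of_nonneg_right (hδ h) (abs_nonneg _)
              _ = c := by rw [hc, Finset.mul_sum]
    · positivity
  · apply le_csSup
    · -- bounded above
      refine ⟨|s| + c, ?_⟩
      rintro t ⟨δ, hδ, rfl⟩
      rw [key]
      calc |s + ∑ h, δ h * w h| ≤ |s| + |∑ h, δ h * w h| := abs_add_le _ _
        _ ≤ |s| + c := by
            gcongr
            calc |∑ h, δ h * w h| ≤ ∑ h, |δ h * w h| := Finset.abs_sum_le_sum_abs _ _
              _ ≤ ∑ h, ε * |w h| := by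
                  apply Finset.sum_le_sum
                  intro h _
                  rw [abs_mul]
                  exact mul_le_mul_of_nonneg_right (hδ h) (abs_nonneg _)
              _ = c := by rw [hc, Finset.mul_sum]
    · -- the maximizer is in the set
      set σ : ℝ := if 0 ≤ s then 1 else -1 with hσ
      refine ⟨fun h => ε * σ * (if 0 ≤ w h then 1 else -1), ?_, ?_⟩
      · intro h
        rw [abs_mul, abs_mul]
        have h1 : |σ| = 1 := by rw [hσ]; split <;> simp
        have h2 : |(if 0 ≤ w h then (1:ℝ) else -1)| = 1 := by split <;> simp
        rw [h1, h2, abs_of_nonneg hε]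
        simp
      · rw [key]
        have hterm : ∀ h, ε * σ * (if 0 ≤ w h then (1:ℝ) else -1) * w h
            = σ * (ε * |w h|) := by
          intro h
          rcases le_or_gt 0 (w h) with hw | hw
          · rw [if_pos hw, abs_of_nonneg hw]; ring
          · rw [if_neg (not_le.mpr hw), abs_of_neg hw]; ring
        rw [show (∑ h, ε * σ * (if 0 ≤ w h then (1:ℝ) else -1) * w h)
            = σ * c by
          rw [hc, Finset.mul_sum, Finset.mul_sum]
          exact Finset.sum_congr rfl fun h _ => by rw [hterm h]]
        rcases le_or_gt 0 s with h0 | h0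
        · rw [hσ, if_pos h0, one_mul, abs_of_nonneg (by linarith : (0:ℝ) ≤ s + c),
            abs_of_nonneg h0]
        · rw [hσ, if_neg (not_le.mpr h0), neg_one_mul,
            abs_of_nonpos (by linarith : s + -c ≤ 0), abs_of_neg h0]
          ring
end
end

section
/- Let X ∈ ℝ^{n×d}, y ∈ ℝⁿ, β > 0, and let ℓ(·, y) : ℝⁿ → ℝ be convex. Let D_1, …, D_P be the distinct diagonal matrices of the form diag([Xu ≥ 0]) over u ∈ ℝ^d, and suppose the convex program inf over (v_i, w_i)_{i=1}^P of ℓ(∑_{i=1}^P D_i X (v_i − w_i), y) + β ∑_{i=1}^P (‖v_i‖₂ + ‖w_i‖₂), subject to (2D_i − I_n) X v_i ≥ 0 and (2D_i − I_n) X w_i ≥ 0 for all i ∈ [P], attains an optimal solution. Then there exists an optimal solution (v_i*, w_i*)_{i=1}^P of this program with |{i : v_i* ≠ 0}| + |{i : w_i* ≠ 0}| ≤ n + 1. -/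
open Matrix

noncomputable section

lemma conic_carath {ι : Type*} [Fintype ι] {E : Type*} [AddCommGroup E] [Module ℝ E]
    [FiniteDimensional ℝ E] (c : ι → E) (lam : ι → ℝ) (hpos : ∀ i, 0 ≤ lam i) :
    ∃ lam' : ι → ℝ, (∀ i, 0 ≤ lam' i) ∧ (∀ i, lam i = 0 → lam' i = 0) ∧
      ∑ i, lam' i • c i = ∑ i, lam i • c i ∧
      (Finset.univ.filter fun i => lam' i ≠ 0).card ≤ Module.finrank ℝ E := by
  classical
  suffices H : ∀ k (lam : ι → ℝ), (Finset.univ.filter fun i => lam i ≠ 0).card ≤ k →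
      (∀ i, 0 ≤ lam i) →
      ∃ lam' : ι → ℝ, (∀ i, 0 ≤ lam' i) ∧ (∀ i, lam i = 0 → lam' i = 0) ∧
        ∑ i, lam' i • c i = ∑ i, lam i • c i ∧
        (Finset.univ.filter fun i => lam' i ≠ 0).card ≤ Module.finrank ℝ E by
    exact H _ lam le_rfl hpos
  intro k
  induction k with
  | zero =>
    intro lam hcard hpos
    exact ⟨lam, hpos, fun i h => h, rfl, hcard.trans (Nat.zero_le _)⟩
  | succ k ih =>
    intro lam hcard hpos
    by_cases hle : (Finset.univ.filter fun i => lam i ≠ 0).card ≤ Module.finrank ℝ E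
    · exact ⟨lam, hpos, fun i h => h, rfl, hle⟩
    push_neg at hle
    set s : Finset ι := Finset.univ.filter fun i => lam i ≠ 0 with hs
    have hdep : ¬ LinearIndependent ℝ (fun i : s => c i) := by
      intro hli
      have := hli.fintype_card_le_finrank
      rw [Fintype.card_coe] at this
      omega
    rw [Fintype.not_linearIndependent_iff] at hdep
    obtain ⟨g, hg0, j0, hj0⟩ := hdep
    -- wlog some coefficient is negative
    obtain ⟨g, hg0, j0, hj0⟩ : ∃ g : s → ℝ, (∑ i : s, g i • c i = 0) ∧ ∃ j0, g j0 < 0 := by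
      rcases lt_or_gt_of_ne hj0 with h | h
      · exact ⟨g, hg0, j0, h⟩
      · refine ⟨-g, ?_, j0, by simpa using h⟩
        simp only [Pi.neg_apply, neg_smul, Finset.sum_neg_distrib, hg0, neg_zero]
    -- extend to ι
    set ν : ι → ℝ := fun i => if h : i ∈ s then g ⟨i, h⟩ else 0 with hν
    have hνs : ∀ i, i ∉ s → ν i = 0 := fun i hi => by simp [hν, hi]
    have hν0 : ∑ i, ν i • c i = 0 := by
      rw [← Finset.sum_subset (Finset.subset_univ s)
        (fun x _ hx => by simp [hν, hx])]
      rw [← Finset.sum_attach s (fun i => ν i • c i)]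
      rw [← hg0]
      exact Finset.sum_congr rfl (fun i _ => by simp [hν, i.2])
    have hj0s : (j0 : ι) ∈ s := j0.2
    have hνj0 : ν (j0 : ι) < 0 := by simpa [hν, j0.2] using hj0
    set T : Finset ι := s.filter fun i => ν i < 0 with hT
    have hTne : T.Nonempty := ⟨j0, by simp [hT, hj0s, hνj0]⟩
    set t : ℝ := T.inf' hTne (fun i => lam i / (-ν i)) with htd
    have ht0 : 0 ≤ t := by
      apply Finset.le_inf'
      intro b hb
      rw [hT, Finset.mem_filter] at hb
      exact div_nonneg (hpos b) (by linarith [hb.2])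
    have hbound : ∀ i ∈ T, 0 ≤ lam i + t * ν i := by
      intro i hi
      have hi' := hi
      rw [hT, Finset.mem_filter] at hi'
      have hν' : 0 < -ν i := by linarith [hi'.2]
      have := Finset.inf'_le (fun i => lam i / (-ν i)) hi
      rw [← htd] at this
      have := (le_div_iff₀ hν').mp this
      nlinarith
    obtain ⟨i₀, hi₀T, hi₀⟩ := Finset.exists_mem_eq_inf' hTne (fun i => lam i / (-ν i))
    have hi₀s : i₀ ∈ s := (Finset.mem_filter.mp hi₀T).1
    have hi₀ν : ν i₀ < 0 := (Finset.mem_filter.mp hi₀T).2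
    set lam'' : ι → ℝ := fun i => lam i + t * ν i with hl''
    have h''pos : ∀ i, 0 ≤ lam'' i := by
      intro i
      by_cases hνi : ν i < 0
      · have his : i ∈ s := by
          by_contra h; rw [hνs i h] at hνi; exact lt_irrefl 0 hνi
        exact hbound i (by simp [hT, his, hνi])
      · push_neg at hνi
        exact add_nonneg (hpos i) (mul_nonneg ht0 hνi)
    have hi₀0 : lam'' i₀ = 0 := by
      have hne : ν i₀ ≠ 0 := ne_of_lt hi₀ν
      rw [hl'']
      simp only [htd, hi₀]
      have h5 : lam i₀ * ν i₀ / -ν i₀ = -lam i₀ := by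
        rw [div_neg, mul_div_cancel_right₀ _ hne]
      rw [mul_comm, ← mul_div_assoc] at *
      rw [h5]
      ring
    have hsupp'' : (Finset.univ.filter fun i => lam'' i ≠ 0) ⊆ s.erase i₀ := by
      intro i hi
      rw [Finset.mem_filter] at hi
      rw [Finset.mem_erase]
      constructor
      · rintro rfl; exact hi.2 hi₀0
      · by_contra h
        have h1 : lam i = 0 := by
          by_contra h2; exact h (by simp [hs, h2])
        exact hi.2 (by simp [hl'', h1, hνs i h])
    have hcard'' : (Finset.univ.filter fun i => lam'' i ≠ 0).card ≤ k := by
      have h1 := Finset.card_le_card hsupp''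
      rw [Finset.card_erase_of_mem hi₀s] at h1
      have h2 : 1 ≤ s.card := Finset.card_pos.mpr ⟨i₀, hi₀s⟩
      omega
    have hsum'' : ∑ i, lam'' i • c i = ∑ i, lam i • c i := by
      simp only [hl'', add_smul, mul_smul, Finset.sum_add_distrib]
      rw [← Finset.smul_sum, hν0, smul_zero, add_zero]
    obtain ⟨lam', h1, h2, h3, h4⟩ := ih lam'' hcard'' h''pos
    refine ⟨lam', h1, ?_, h3.trans hsum'', h4⟩
    intro i hi
    apply h2
    have his : i ∉ s := by simp [hs, hi]
    simp [hl'', hi, hνs i his]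


/-- if the convex program attains an optimal solution, then it attains one
with at most `n + 1` nonzero blocks. -/
theorem statement_17 {n d P : ℕ}
    (X : Matrix (Fin n) (Fin d) ℝ) (y : Fin n → ℝ) (β : ℝ) (hβ : 0 < β)
    (ℓ : (Fin n → ℝ) → ℝ) (hℓ : ConvexOn ℝ Set.univ ℓ)
    (D : Fin P → Matrix (Fin n) (Fin n) ℝ)
    (hDinj : Function.Injective D)
    (hDform : ∀ i, ∃ u : Fin d → ℝ,
      D i = Matrix.diagonal (fun k => if 0 ≤ (X *ᵥ u) k then (1 : ℝ) else 0))
    (hDall : ∀ u : Fin d → ℝ, ∃ i,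
      D i = Matrix.diagonal (fun k => if 0 ≤ (X *ᵥ u) k then (1 : ℝ) else 0))
    (cvxVals : Set ℝ)
    (hcvxVals : cvxVals = {c : ℝ | ∃ v w : Fin P → Fin d → ℝ,
      (∀ i, ∀ k, 0 ≤ (((2 : ℝ) • D i - 1) *ᵥ (X *ᵥ v i)) k) ∧
      (∀ i, ∀ k, 0 ≤ (((2 : ℝ) • D i - 1) *ᵥ (X *ᵥ w i)) k) ∧
      c = ℓ (∑ i, D i *ᵥ (X *ᵥ (v i - w i))) +
        β * ∑ i, (Real.sqrt (∑ h, (v i h) ^ 2) + Real.sqrt (∑ h, (w i h) ^ 2))})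
    -- the program attains an optimal solution:
    (hattain : ∃ v w : Fin P → Fin d → ℝ,
      (∀ i, ∀ k, 0 ≤ (((2 : ℝ) • D i - 1) *ᵥ (X *ᵥ v i)) k) ∧
      (∀ i, ∀ k, 0 ≤ (((2 : ℝ) • D i - 1) *ᵥ (X *ᵥ w i)) k) ∧
      ℓ (∑ i, D i *ᵥ (X *ᵥ (v i - w i))) +
        β * ∑ i, (Real.sqrt (∑ h, (v i h) ^ 2) + Real.sqrt (∑ h, (w i h) ^ 2))
        = sInf cvxVals) :
    ∃ vstar wstar : Fin P → Fin d → ℝ,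
      (∀ i, ∀ k, 0 ≤ (((2 : ℝ) • D i - 1) *ᵥ (X *ᵥ vstar i)) k) ∧
      (∀ i, ∀ k, 0 ≤ (((2 : ℝ) • D i - 1) *ᵥ (X *ᵥ wstar i)) k) ∧
      ℓ (∑ i, D i *ᵥ (X *ᵥ (vstar i - wstar i))) +
        β * ∑ i, (Real.sqrt (∑ h, (vstar i h) ^ 2) + Real.sqrt (∑ h, (wstar i h) ^ 2))
        = sInf cvxVals ∧
      (Finset.univ.filter fun i => vstar i ≠ 0).card +
        (Finset.univ.filter fun i => wstar i ≠ 0).card ≤ n + 1 := by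
  classical
  obtain ⟨v, w, hv, hw, hopt⟩ := hattain
  set c : (Fin P ⊕ Fin P) → (Fin n → ℝ) × ℝ := fun i =>
    (Sum.elim (fun j => D j *ᵥ (X *ᵥ v j)) (fun j => -(D j *ᵥ (X *ᵥ w j))) i,
     Real.sqrt (∑ h, (Sum.elim v w i h) ^ 2)) with hc
  set lam₀ : (Fin P ⊕ Fin P) → ℝ := fun i => if Sum.elim v w i = 0 then 0 else 1 with hlam₀
  have hlam₀pos : ∀ i, 0 ≤ lam₀ i := by
    intro i; rw [hlam₀]; dsimp only; split <;> norm_num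
  obtain ⟨lam', h1, h2, h3, h4⟩ := conic_carath c lam₀ hlam₀pos
  -- finrank of target space
  have hfr : Module.finrank ℝ ((Fin n → ℝ) × ℝ) = n + 1 := by
    simp [Module.finrank_prod]
  -- c vanishes on zero blocks, so ∑ lam₀ • c = ∑ c
  have hczero : ∀ i, Sum.elim v w i = 0 → c i = 0 := by
    rintro (j | j) hz
    · simp only [Sum.elim_inl] at hz
      simp [hc, hz, Matrix.mulVec_zero, Prod.mk_eq_zero]
    · simp only [Sum.elim_inr] at hz
      simp [hc, hz, Matrix.mulVec_zero, Prod.mk_eq_zero]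
  have hsum : ∑ i, lam' i • c i = ∑ i, c i := by
    rw [h3]
    refine Finset.sum_congr rfl fun i _ => ?_
    by_cases hz : Sum.elim v w i = 0
    · simp [hlam₀, hz, hczero i hz]
    · simp [hlam₀, hz]
  -- component equalities
  have hF : ∑ i, lam' i • (c i).1 = ∑ i, (c i).1 := by
    have := congrArg Prod.fst hsum
    simpa [Prod.fst_sum] using this
  have hS : ∑ i, lam' i * (c i).2 = ∑ i, (c i).2 := by
    have := congrArg Prod.snd hsum
    simpa [Prod.snd_sum] using this
  -- the sparse solution
  refine ⟨fun j => lam' (.inl j) • v j, fun j => lam' (.inr j) • w j, ?_, ?_, ?_, ?_⟩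
  · intro i k
    rw [Matrix.mulVec_smul, Matrix.mulVec_smul]
    exact mul_nonneg (h1 _) (hv i k)
  · intro i k
    rw [Matrix.mulVec_smul, Matrix.mulVec_smul]
    exact mul_nonneg (h1 _) (hw i k)
  · -- objective value
    have hsqrt : ∀ (t : ℝ), 0 ≤ t → ∀ z : Fin d → ℝ,
        Real.sqrt (∑ h, (t • z) h ^ 2) = t * Real.sqrt (∑ h, z h ^ 2) := by
      intro t ht z
      simp only [Pi.smul_apply, smul_eq_mul, mul_pow, ← Finset.mul_sum]
      rw [Real.sqrt_mul (sq_nonneg t), Real.sqrt_sq ht]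
    have hout : ∑ j, D j *ᵥ (X *ᵥ ((fun j => lam' (.inl j) • v j) j - (fun j => lam' (.inr j) • w j) j))
        = ∑ j, D j *ᵥ (X *ᵥ (v j - w j)) := by
      calc ∑ j, D j *ᵥ (X *ᵥ (lam' (.inl j) • v j - lam' (.inr j) • w j))
          = ∑ i : Fin P ⊕ Fin P, lam' i • (c i).1 := by
            rw [Fintype.sum_sum_type, ← Finset.sum_add_distrib]
            refine Finset.sum_congr rfl fun j _ => ?_
            simp only [hc, Sum.elim_inl, Sum.elim_inr, smul_neg]
            rw [Matrix.mulVec_sub, Matrix.mulVec_sub, Matrix.mulVec_smul,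
              Matrix.mulVec_smul, Matrix.mulVec_smul, Matrix.mulVec_smul]
            abel
        _ = ∑ i : Fin P ⊕ Fin P, (c i).1 := hF
        _ = ∑ j, D j *ᵥ (X *ᵥ (v j - w j)) := by
            rw [Fintype.sum_sum_type, ← Finset.sum_add_distrib]
            refine Finset.sum_congr rfl fun j _ => ?_
            simp only [hc, Sum.elim_inl, Sum.elim_inr]
            rw [Matrix.mulVec_sub, Matrix.mulVec_sub]
            abel
    have hpen : ∑ j, (Real.sqrt (∑ h, ((lam' (.inl j) • v j) h) ^ 2)
          + Real.sqrt (∑ h, ((lam' (.inr j) • w j) h) ^ 2))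
        = ∑ j, (Real.sqrt (∑ h, (v j h) ^ 2) + Real.sqrt (∑ h, (w j h) ^ 2)) := by
      calc ∑ j, (Real.sqrt (∑ h, ((lam' (.inl j) • v j) h) ^ 2)
              + Real.sqrt (∑ h, ((lam' (.inr j) • w j) h) ^ 2))
          = ∑ i : Fin P ⊕ Fin P, lam' i * (c i).2 := by
            rw [Fintype.sum_sum_type, ← Finset.sum_add_distrib]
            refine Finset.sum_congr rfl fun j _ => ?_
            rw [hsqrt _ (h1 _), hsqrt _ (h1 _)]
            simp [hc]
        _ = ∑ i : Fin P ⊕ Fin P, (c i).2 := hS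
        _ = ∑ j, (Real.sqrt (∑ h, (v j h) ^ 2) + Real.sqrt (∑ h, (w j h) ^ 2)) := by
            rw [Fintype.sum_sum_type, ← Finset.sum_add_distrib]
            exact Finset.sum_congr rfl fun j _ => by simp [hc]
    rw [hout]
    simp only [Pi.smul_apply] at hpen ⊢
    rw [hpen]
    exact hopt
  · -- sparsity
    have hsub1 : (Finset.univ.filter fun j => (fun j => lam' (.inl j) • v j) j ≠ 0)
        ⊆ Finset.univ.filter fun j => lam' (Sum.inl j) ≠ 0 := by
      intro j hj
      simp only [Finset.mem_filter, Finset.mem_univ, true_and] at hj ⊢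
      intro h; exact hj (by simp [h])
    have hsub2 : (Finset.univ.filter fun j => (fun j => lam' (.inr j) • w j) j ≠ 0)
        ⊆ Finset.univ.filter fun j => lam' (Sum.inr j) ≠ 0 := by
      intro j hj
      simp only [Finset.mem_filter, Finset.mem_univ, true_and] at hj ⊢
      intro h; exact hj (by simp [h])
    have hsplit : (Finset.univ.filter fun i : Fin P ⊕ Fin P => lam' i ≠ 0).card
        = (Finset.univ.filter fun j => lam' (Sum.inl j) ≠ 0).card
          + (Finset.univ.filter fun j => lam' (Sum.inr j) ≠ 0).card := by
      simp only [Finset.card_filter]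
      rw [Fintype.sum_sum_type]
    have := Finset.card_le_card hsub1
    have := Finset.card_le_card hsub2
    rw [hfr] at h4
    omega
end
end
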